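/- arXiv:2003.02679 — 14 statements merged into one kernel-verified Lean document; each statement's English description precedes it below -/
import Mathlib

section
/- For nonnegative integers r, s, j, the product of binomial coefficients C(r+j, r) * C(s+j, s) equals the sum over k of C(r, k) * C(s, k) * C(j+r+s-k, r+s). (Surányi's identity) -/
open Finset

/-- Vandermonde's identity in range form. -/
lemma vand_range (a b n : ℕ) :
    (a + b).choose n = ∑ m ∈ range (n + 1), a.choose m * b.choose (n - m) := by
  rw [Nat.add_choose_eq, Finset.Nat.sum_antidiagonal_eq_sum_range_succ_mk]

/-- Symmetric subset-of-subset identity. -/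
lemma choose_sub_symm (r k m : ℕ) :
    r.choose k * (r - k).choose m = r.choose m * (r - m).choose k := by
  by_cases h : k + m ≤ r
  · have hk : k ≤ r := le_trans (Nat.le_add_right _ _) h
    have hm : m ≤ r := le_trans (Nat.le_add_left _ _) h
    have h1 : r.choose (k + m) * (k + m).choose k = r.choose k * (r - k).choose m := by
      have := Nat.choose_mul (n := r) (k := k + m) (s := k) (Nat.le_add_right _ _)
      simpa using this
    have h2 : r.choose (k + m) * (k + m).choose m = r.choose m * (r - m).choose k := by
      have := Nat.choose_mul (n := r) (k := k + m) (s := m) (Nat.le_add_left _ _)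
      simpa [Nat.add_sub_cancel] using this
    rw [← h1, ← h2, Nat.choose_symm_add]
  · push_neg at h
    have hL : r.choose k * (r - k).choose m = 0 := by
      by_cases hk : k ≤ r
      · have : r - k < m := by omega
        rw [Nat.choose_eq_zero_of_lt this, Nat.mul_zero]
      · rw [Nat.choose_eq_zero_of_lt (by omega), Nat.zero_mul]
    have hR : r.choose m * (r - m).choose k = 0 := by
      by_cases hm : m ≤ r
      · have : r - m < k := by omega
        rw [Nat.choose_eq_zero_of_lt this, Nat.mul_zero]
      · rw [Nat.choose_eq_zero_of_lt (by omega), Nat.zero_mul]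
    rw [hL, hR]

/-- Vandermonde in the "product of same-index binomials" form, with a large range. -/
lemma vand_prod (a s n : ℕ) (ha : a ≤ n) :
    ∑ k ∈ range (n + 1), a.choose k * s.choose k = (a + s).choose s := by
  have h1 : ∑ k ∈ range (n + 1), a.choose k * s.choose k
      = ∑ k ∈ range (n + s + 1), a.choose k * s.choose k := by
    apply Finset.sum_subset
    · intro x hx; simp only [mem_range] at *; omega
    · intro x hx hx'
      simp only [mem_range] at hx hx'
      rw [Nat.choose_eq_zero_of_lt (by omega), Nat.zero_mul]
  have h2 : ∑ k ∈ range (s + 1), a.choose k * s.choose (s - k)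
      = ∑ k ∈ range (n + s + 1), a.choose k * s.choose k := by
    rw [Finset.sum_congr rfl (fun k hk => by
      simp only [mem_range] at hk
      rw [Nat.choose_symm (by omega)])]
    apply Finset.sum_subset
    · intro x hx; simp only [mem_range] at *; omega
    · intro x hx hx'
      simp only [mem_range] at hx hx'
      rw [Nat.choose_eq_zero_of_lt (show s < x by omega), Nat.mul_zero]
  rw [h1, ← h2, ← vand_range]

/-- Trinomial revision step. -/
lemma trinom (j s t : ℕ) :
    (j + s).choose (t + s) * (t + s).choose s = (j + s).choose s * j.choose t := by
  by_cases h : t ≤ j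
  · have := Nat.choose_mul (n := j + s) (k := t + s) (s := s)
      (Nat.le_add_left _ _)
    simpa [Nat.add_sub_cancel] using this
  · rw [Nat.choose_eq_zero_of_lt (show j + s < t + s by omega),
      Nat.choose_eq_zero_of_lt (show j < t by omega), Nat.zero_mul, Nat.mul_zero]

/-- Surányi's identity: C(r+j, r) * C(s+j, s) = ∑ₖ C(r,k) * C(s,k) * C(j+r+s-k, r+s).
The sum over all k reduces to k ∈ {0,...,r} since C(r,k) = 0 for k > r. -/
theorem suranyi_identity (r s j : ℕ) :
    (r + j).choose r * (s + j).choose s =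
      ∑ k ∈ Finset.range (r + 1),
        r.choose k * s.choose k * (j + r + s - k).choose (r + s) := by
  -- Step 1: expand the binomial via Vandermonde
  have step1 : ∀ k ∈ range (r + 1),
      r.choose k * s.choose k * (j + r + s - k).choose (r + s)
      = ∑ m ∈ range (r + 1),
          r.choose k * s.choose k * ((r - k).choose m * (j + s).choose (r + s - m)) := by
    intro k hk
    simp only [mem_range] at hk
    have hk' : k ≤ r := by omega
    have he : j + r + s - k = (r - k) + (j + s) := by omega
    rw [he, vand_range]
    rw [← Finset.mul_sum]
    congr 1
    symm
    apply Finset.sum_subset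
    · intro x hx; simp only [mem_range] at *; omega
    · intro x hx hx'
      simp only [mem_range] at hx hx'
      rw [Nat.choose_eq_zero_of_lt (show r - k < x by omega), Nat.zero_mul]
  rw [Finset.sum_congr rfl step1, Finset.sum_comm]
  -- Step 2: inner sum over k
  have step2 : ∀ m ∈ range (r + 1),
      (∑ k ∈ range (r + 1),
        r.choose k * s.choose k * ((r - k).choose m * (j + s).choose (r + s - m)))
      = r.choose m * ((r - m) + s).choose s * (j + s).choose (r + s - m) := by
    intro m hm
    simp only [mem_range] at hm
    have : ∀ k ∈ range (r + 1),
        r.choose k * s.choose k * ((r - k).choose m * (j + s).choose (r + s - m))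
        = r.choose m * ((r - m).choose k * s.choose k) * (j + s).choose (r + s - m) := by
      intro k _
      calc r.choose k * s.choose k * ((r - k).choose m * (j + s).choose (r + s - m))
          = (r.choose k * (r - k).choose m) * (s.choose k * (j + s).choose (r + s - m)) := by
            ring
        _ = (r.choose m * (r - m).choose k) * (s.choose k * (j + s).choose (r + s - m)) := by
            rw [choose_sub_symm]
        _ = r.choose m * ((r - m).choose k * s.choose k) * (j + s).choose (r + s - m) := by
            ring
    rw [Finset.sum_congr rfl this, ← Finset.sum_mul, ← Finset.mul_sum,
      vand_prod (r - m) s r (by omega)]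
  rw [Finset.sum_congr rfl step2]
  -- Step 3: trinomial revision and final Vandermonde
  have step3 : ∀ m ∈ range (r + 1),
      r.choose m * ((r - m) + s).choose s * (j + s).choose (r + s - m)
      = (j + s).choose s * (r.choose m * j.choose (r - m)) := by
    intro m hm
    simp only [mem_range] at hm
    have he : r + s - m = (r - m) + s := by omega
    rw [he]
    have := trinom j s (r - m)
    calc r.choose m * ((r - m) + s).choose s * (j + s).choose ((r - m) + s)
        = r.choose m * ((j + s).choose ((r - m) + s) * ((r - m) + s).choose s) := by ring
      _ = r.choose m * ((j + s).choose s * j.choose (r - m)) := by rw [this]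
      _ = (j + s).choose s * (r.choose m * j.choose (r - m)) := by ring
  rw [Finset.sum_congr rfl step3, ← Finset.mul_sum, ← vand_range]
  rw [Nat.add_comm s j, Nat.add_comm r j, Nat.mul_comm]
end

section
/- For nonnegative integers r, s, m, the sum over j from 0 to m of C(r+j, j) * C(s+j, j) equals the sum over k of C(r, k) * C(s, k) * C(r+s+1+m-k, r+s+1). (Double Hockey-Stick identity) -/
/-!
Surányi's identity `C(r+p,p) C(s+p,p) = ∑ₖ C(r,k) C(s,k) C(r+s+p-k, r+s)`, summed over
`p = 0, …, m`, gives the theorem once the hockey-stick identity is applied to the last factor.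
Surányi's identity follows by expanding `C((r-k) + (s+p), r+s)` with Vandermonde, trading
`C(r,k) C(r-k,r-b)` for `C(r,b) C(b,k)`, and collapsing the two resulting diagonal sums with
`∑ₖ C(x,k) C(y,k) = C(x+y,x)`.
-/

open Finset

namespace Nat

theorem sum_range_choose_mul_choose {x n : ℕ} (hx : x ≤ n) (y : ℕ) :
    ∑ k ∈ range (n + 1), x.choose k * y.choose k = (x + y).choose x := by
  have hvdm : (x + y).choose x = ∑ k ∈ range (x + 1), x.choose k * y.choose k := by
    rw [add_comm, add_choose_eq, Finset.Nat.sum_antidiagonal_eq_sum_range_succ_mk]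
    refine sum_congr rfl fun k hk => ?_
    rw [mul_comm, choose_symm (mem_range_succ_iff.mp hk)]
  rw [hvdm]
  refine (sum_subset (range_subset_range.mpr (by omega)) fun k _ hk => ?_).symm
  rw [choose_eq_zero_of_lt (by simpa using hk), zero_mul]

theorem add_choose_add_eq_sum_range {x r : ℕ} (hx : x ≤ r) (y s : ℕ) :
    (x + y).choose (r + s) = ∑ b ∈ range (r + 1), x.choose (r - b) * y.choose (s + b) := by
  rw [add_comm x, add_choose_eq, Finset.Nat.sum_antidiagonal_eq_sum_range_succ_mk,
    show (r + s).succ = s + (r + 1) by omega, sum_range_add]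
  have hlow : ∀ a ∈ range s, y.choose a * x.choose (r + s - a) = 0 := fun a ha => by
    rw [choose_eq_zero_of_lt (by have := mem_range.mp ha; omega : x < r + s - a), mul_zero]
  rw [sum_eq_zero hlow, zero_add]
  refine sum_congr rfl fun b _ => ?_
  rw [mul_comm, show r + s - (s + b) = r - b by omega]

theorem choose_mul_choose_sub_sub {b r : ℕ} (hb : b ≤ r) (k : ℕ) :
    r.choose k * (r - k).choose (r - b) = r.choose b * b.choose k := by
  rcases le_or_gt k b with hkb | hbk
  · rw [choose_mul hkb, choose_symm_of_eq_add (by omega : r - k = (b - k) + (r - b))]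
  · rcases le_or_gt k r with hkr | hrk
    · rw [choose_eq_zero_of_lt (by omega : r - k < r - b), choose_eq_zero_of_lt hbk,
        mul_zero, mul_zero]
    · rw [choose_eq_zero_of_lt hrk, choose_eq_zero_of_lt hbk, zero_mul, mul_zero]

theorem sum_range_add_choose_add_choose_succ (n m k : ℕ) :
    ∑ j ∈ range (m + 1), (n + j).choose k + n.choose (k + 1) = (n + m + 1).choose (k + 1) := by
  induction m with
  | zero => simp [choose_succ_succ]
  | succ m ih =>
    rw [sum_range_succ, add_right_comm, ih, ← add_assoc, choose_succ_succ (n + m + 1), add_comm]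

theorem choose_add_mul_choose_add_eq_sum (r s p : ℕ) :
    (r + p).choose p * (s + p).choose p =
      ∑ k ∈ range (r + 1), r.choose k * s.choose k * (r + s + p - k).choose (r + s) := by
  symm
  calc ∑ k ∈ range (r + 1), r.choose k * s.choose k * (r + s + p - k).choose (r + s)
      = ∑ k ∈ range (r + 1), ∑ b ∈ range (r + 1),
          r.choose k * (r - k).choose (r - b) * (s.choose k * (s + p).choose (s + b)) := by
        refine sum_congr rfl fun k hk => ?_
        rw [show r + s + p - k = (r - k) + (s + p) by have := mem_range.mp hk; omega,
          add_choose_add_eq_sum_range (Nat.sub_le r k), mul_sum]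
        exact sum_congr rfl fun b _ => by ring
    _ = ∑ b ∈ range (r + 1), r.choose b * (s + p).choose (s + b) *
          ∑ k ∈ range (r + 1), b.choose k * s.choose k := by
        rw [sum_comm]
        refine sum_congr rfl fun b hb => ?_
        rw [mul_sum]
        refine sum_congr rfl fun k _ => ?_
        rw [choose_mul_choose_sub_sub (mem_range_succ_iff.mp hb)]
        ring
    _ = ∑ b ∈ range (r + 1), (s + p).choose s * (r.choose b * p.choose b) := by
        refine sum_congr rfl fun b hb => ?_
        rw [sum_range_choose_mul_choose (mem_range_succ_iff.mp hb), mul_assoc,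
          add_comm b s, ← choose_symm_add, choose_mul (Nat.le_add_right s b)]
        simp only [Nat.add_sub_cancel_left]
        ring
    _ = (r + p).choose p * (s + p).choose p := by
        rw [← mul_sum, sum_range_choose_mul_choose le_rfl, choose_symm_add, choose_symm_add,
          mul_comm]

end Nat

/-- Double Hockey-Stick identity. -/
theorem double_hockey_stick (r s m : ℕ) :
    ∑ j ∈ Finset.range (m + 1), (r + j).choose j * (s + j).choose j =
      ∑ k ∈ Finset.range (r + 1),
        r.choose k * s.choose k * (r + s + 1 + m - k).choose (r + s + 1) := by
  calc ∑ j ∈ range (m + 1), (r + j).choose j * (s + j).choose j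
      = ∑ k ∈ range (r + 1), r.choose k * s.choose k *
          ∑ j ∈ range (m + 1), (r + s - k + j).choose (r + s) := by
        simp only [Nat.choose_add_mul_choose_add_eq_sum, mul_sum]
        rw [sum_comm]
        refine sum_congr rfl fun k hk => sum_congr rfl fun j _ => ?_
        rw [show r + s + j - k = r + s - k + j by have := mem_range.mp hk; omega]
    _ = _ := by
        refine sum_congr rfl fun k hk => ?_
        have hk : k ≤ r := mem_range_succ_iff.mp hk
        have hockey := Nat.sum_range_add_choose_add_choose_succ (r + s - k) m (r + s)
        rw [Nat.choose_eq_zero_of_lt (by omega : r + s - k < r + s + 1), add_zero] at hockey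
        rw [hockey, show r + s - k + m + 1 = r + s + 1 + m - k by omega]
end

section
/- Let n, k be integers with 0 < k < n, and let c_1 ≥ c_2 ≥ ... ≥ c_k be nonnegative integers with n ≥ c_1 + ... + c_{k-1} and n ≤ c_1 + ... + c_k. Then the number of tuples (x_1, ..., x_k) of nonnegative integers with 0 ≤ x_i ≤ c_i for all i and x_1 + ... + x_k = n equals C(k - 1 + (c_1 + ... + c_k) - n, k - 1). -/
/-! Complementing every coordinate, `x ↦ c - x`, turns the tuples below `c` with sum `n` into the
tuples below `c` with sum `m = ∑ c - n`. The hypotheses force `m ≤ cₖ ≤ cᵢ` for every `i`, so the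
capacities no longer constrain tuples of sum `m`, and stars and bars counts them as
`multichoose k m = C(k - 1 + m, k - 1)`. -/

open Finset

theorem natCard_subtype_sum_eq_multichoose (ι : Type*) [Fintype ι] (m : ℕ) :
    Nat.card {x : ι → ℕ // ∑ i, x i = m} = (Fintype.card ι).multichoose m := by
  classical
  rw [← Nat.card_congr (Sym.equivNatSumOfFintype ι m), Nat.card_eq_fintype_card,
    Sym.card_sym_eq_multichoose]

section
variable {ι : Type*} [Fintype ι] [DecidableEq ι]

theorem card_filter_sum_eq_card_filter_sum_tsub (c : ι → ℕ) {n : ℕ} (hn : n ≤ ∑ i, c i) :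
    #((Icc 0 c).filter fun x => ∑ i, x i = n) =
      #((Icc 0 c).filter fun x => ∑ i, x i = ∑ i, c i - n) := by
  have hsum : ∀ x ≤ c, ∑ i, (c - x) i = ∑ i, c i - ∑ i, x i := fun x hx =>
    sum_tsub_distrib _ fun i _ => hx i
  refine card_nbij' (c - ·) (c - ·) ?_ ?_ ?_ ?_ <;>
    intro x hx <;> simp only [coe_filter, mem_Icc, Set.mem_ofPred_eq] at hx ⊢
  · refine ⟨⟨fun _ => Nat.zero_le _, tsub_le_self⟩, ?_⟩
    rw [hsum x hx.1.2, hx.2]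
  · refine ⟨⟨fun _ => Nat.zero_le _, tsub_le_self⟩, ?_⟩
    rw [hsum x hx.1.2, hx.2, tsub_tsub_cancel_of_le hn]
  all_goals exact tsub_tsub_cancel_of_le hx.1.2

theorem card_filter_sum_eq_multichoose (c : ι → ℕ) {m : ℕ} (hm : ∀ i, m ≤ c i) :
    #((Icc 0 c).filter fun x => ∑ i, x i = m) = (Fintype.card ι).multichoose m := by
  have hbound : ∀ x : ι → ℕ, ∑ i, x i = m → x ≤ c := fun x hx i =>
    (single_le_sum (fun j _ => Nat.zero_le (x j)) (mem_univ i)).trans (hx.trans_le (hm i))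
  rw [← Nat.card_eq_finsetCard, ← natCard_subtype_sum_eq_multichoose]
  refine Nat.card_congr (Equiv.subtypeEquivRight fun x => ?_)
  simp only [mem_filter, mem_Icc]
  exact ⟨fun h => h.2, fun h => ⟨⟨fun _ => Nat.zero_le _, hbound x h⟩, h⟩⟩

end

theorem balls_in_boxes_general (n k : ℕ) (hk : 0 < k) (c : Fin k → ℕ)
    (hmono : ∀ i j : Fin k, i ≤ j → c j ≤ c i)
    (hlow : ∑ i ∈ Finset.univ.erase (⟨k - 1, Nat.sub_lt hk Nat.one_pos⟩ : Fin k), c i ≤ n)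
    (hhigh : n ≤ ∑ i, c i) :
    ((Finset.Icc (0 : Fin k → ℕ) c).filter (fun x => ∑ i, x i = n)).card =
      (k - 1 + (∑ i, c i) - n).choose (k - 1) := by
  set last : Fin k := ⟨k - 1, Nat.sub_lt hk Nat.one_pos⟩
  have hsplit := sum_erase_add univ c (mem_univ last)
  have hcap : ∀ i, ∑ j, c j - n ≤ c i := fun i => by
    have := hmono i last (Fin.le_def.2 (by simp only [last]; omega))
    omega
  rw [card_filter_sum_eq_card_filter_sum_tsub c hhigh, card_filter_sum_eq_multichoose c hcap,
    Fintype.card_fin, Nat.multichoose_eq,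
    show k + (∑ i, c i - n) - 1 = ∑ i, c i - n + (k - 1) by omega,
    show k - 1 + ∑ i, c i - n = ∑ i, c i - n + (k - 1) by omega, Nat.choose_symm_add]

/-- Balls into boxes with capacities. -/
theorem balls_in_boxes (n k : ℕ) (hk : 0 < k) (hkn : k < n) (c : Fin k → ℕ)
    (hmono : ∀ i j : Fin k, i ≤ j → c j ≤ c i)
    (hlow : ∑ i ∈ Finset.univ.erase (⟨k - 1, Nat.sub_lt hk Nat.one_pos⟩ : Fin k), c i ≤ n)
    (hhigh : n ≤ ∑ i, c i) :
    ((Finset.Icc (0 : Fin k → ℕ) c).filter (fun x => ∑ i, x i = n)).card =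
      (k - 1 + (∑ i, c i) - n).choose (k - 1) :=
  balls_in_boxes_general n k hk c hmono hlow hhigh
end

section
/- Let 1 ≤ k ≤ n-1 and let t be a nonnegative integer. Then the sum over j from 0 to t of C(n-k-1+j, j) * C(k-1+j, j) equals the sum over j from 0 to k-1 of C(k-1, j) * C(n-k-1, j) * C(t+n-1-j, n-1). -/
open Finset

/-- Per-term (WZ-certificate) identity used to prove the recurrence for the
Suranyi-type sum. -/
private lemma perk (a b s k : ℕ) (hkb : k ≤ b) :
    (s+1)^2 * (a.choose k * b.choose k * (a+b+s+1-k).choose (a+b))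
      + (k+1)^2 * (a.choose (k+1) * b.choose (k+1) * (a+b+s-k).choose (a+b))
    = (a+s+1) * (b+s+1) * (a.choose k * b.choose k * (a+b+s-k).choose (a+b))
      + k^2 * (a.choose k * b.choose k * (a+b+s+1-k).choose (a+b)) := by
  rcases Nat.lt_or_ge a k with hak | hak
  · have h1 : a.choose k = 0 := Nat.choose_eq_zero_of_lt hak
    have h2 : a.choose (k+1) = 0 := Nat.choose_eq_zero_of_lt (by omega)
    simp [h1, h2]
  · obtain ⟨p, rfl⟩ : ∃ p, a = k + p := ⟨a - k, by omega⟩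
    obtain ⟨q, rfl⟩ : ∃ q, b = k + q := ⟨b - k, by omega⟩
    rcases Nat.lt_or_ge s k with hsk | hsk
    · -- s < k : the `X` binomial vanishes
      have hX : (k+p+(k+q)+s-k).choose (k+p+(k+q)) = 0 :=
        Nat.choose_eq_zero_of_lt (by omega)
      rcases Nat.eq_or_lt_of_le (show s+1 ≤ k by omega) with hk1 | hk1
      · rw [hX, show k+p+(k+q)+s+1-k = k+p+(k+q) from by omega,
          Nat.choose_self, ← hk1]
        ring
      · have hY : (k+p+(k+q)+s+1-k).choose (k+p+(k+q)) = 0 :=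
          Nat.choose_eq_zero_of_lt (by omega)
        simp [hX, hY]
    · -- k ≤ s
      obtain ⟨e, rfl⟩ : ∃ e, s = k + e := ⟨s - k, by omega⟩
      rw [show k+p+(k+q)+(k+e)-k = k+p+(k+q)+e from by omega,
        show k+p+(k+q)+(k+e)+1-k = k+p+(k+q)+e+1 from by omega]
      set A := (k+p).choose k with hA0
      set B := (k+q).choose k with hB0
      set A' := (k+p).choose (k+1) with hA'0
      set B' := (k+q).choose (k+1) with hB'0
      set X := (k+p+(k+q)+e).choose (k+p+(k+q)) with hX0
      set Y := (k+p+(k+q)+e+1).choose (k+p+(k+q)) with hY0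
      have hA : A' * (k+1) = A * p := by
        have := Nat.choose_succ_right_eq (k+p) k
        simpa [hA0, hA'0] using this
      have hB : B' * (k+1) = B * q := by
        have := Nat.choose_succ_right_eq (k+q) k
        simpa [hB0, hB'0] using this
      have hY : (e+1) * Y = (k+p+(k+q)+e+1) * X := by
        have h1 : Y = (k+p+(k+q)+e+1).choose (e+1) := by
          rw [hY0, ← Nat.choose_symm (show e+1 ≤ k+p+(k+q)+e+1 by omega)]
          congr 1
          omega
        have h2 : (k+p+(k+q)+e+1) * ((k+p+(k+q)+e).choose e)
            = (k+p+(k+q)+e+1).choose (e+1) * (e+1) :=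
          Nat.add_one_mul_choose_eq (k+p+(k+q)+e) e
        have h3 : (k+p+(k+q)+e).choose e = X := by
          rw [hX0, ← Nat.choose_symm (show e ≤ k+p+(k+q)+e by omega)]
          congr 1
          omega
        rw [h3] at h2
        rw [h1, mul_comm]
        exact h2.symm
      apply Nat.eq_of_mul_eq_mul_left (show 0 < e+1 from Nat.succ_pos e)
      zify at hA hB hY ⊢
      linear_combination (((k+e+1)^2 - k^2) * A * B) * hY
        + ((e+1) * X * (k+1) * B') * hA + ((e+1) * X * p * A) * hB

private lemma step_eq (a b s : ℕ) :
    (s+1)^2 * ∑ k ∈ range (b+1),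
        a.choose k * b.choose k * (a+b+(s+1)-k).choose (a+b)
    = (a+s+1) * (b+s+1) * ∑ k ∈ range (b+1),
        a.choose k * b.choose k * (a+b+s-k).choose (a+b) := by
  set g : ℕ → ℕ := fun k =>
    k^2 * (a.choose k * b.choose k * (a+b+s+1-k).choose (a+b)) with hg
  have tele : ∑ k ∈ range (b+1), g (k+1) = ∑ k ∈ range (b+1), g k := by
    have h1 := Finset.sum_range_succ' g (b+1)
    have h2 := Finset.sum_range_succ g (b+1)
    have h0 : g 0 = 0 := by simp [hg]
    have hb : g (b+1) = 0 := by simp [hg, Nat.choose_succ_self]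
    omega
  have key : ∀ k ∈ range (b+1),
      (s+1)^2 * (a.choose k * b.choose k * (a+b+(s+1)-k).choose (a+b)) + g (k+1)
      = (a+s+1) * (b+s+1) * (a.choose k * b.choose k * (a+b+s-k).choose (a+b))
        + g k := by
    intro k hk
    have hkb : k ≤ b := Nat.lt_succ_iff.mp (Finset.mem_range.mp hk)
    have h := perk a b s k hkb
    simp only [hg]
    rw [show a+b+s+1-(k+1) = a+b+s-k from by omega]
    exact h
  have main := Finset.sum_congr rfl key
  rw [Finset.sum_add_distrib, Finset.sum_add_distrib, tele,
    ← Finset.mul_sum, ← Finset.mul_sum] at main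
  exact Nat.add_right_cancel main

private lemma suranyi (a b s : ℕ) :
    ∑ k ∈ range (b+1), a.choose k * b.choose k * (a+b+s-k).choose (a+b)
    = (a+s).choose s * (b+s).choose s := by
  induction s with
  | zero =>
    rw [Finset.sum_eq_single_of_mem 0 (Finset.mem_range.mpr (Nat.succ_pos b))]
    · simp
    · intro j hj hj0
      have hjb : j ≤ b := Nat.lt_succ_iff.mp (Finset.mem_range.mp hj)
      have hz : (a+b+0-j).choose (a+b) = 0 := Nat.choose_eq_zero_of_lt (by omega)
      rw [hz, mul_zero]
  | succ s ih =>
    have h1 : (a+s+1) * ((a+s).choose s) = (a+s+1).choose (s+1) * (s+1) :=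
      Nat.add_one_mul_choose_eq (a+s) s
    have h2 : (b+s+1) * ((b+s).choose s) = (b+s+1).choose (s+1) * (s+1) :=
      Nat.add_one_mul_choose_eq (b+s) s
    apply Nat.eq_of_mul_eq_mul_left (show 0 < (s+1)^2 by positivity)
    calc (s+1)^2 * ∑ k ∈ range (b+1),
          a.choose k * b.choose k * (a+b+(s+1)-k).choose (a+b)
        = (a+s+1) * (b+s+1) * ((a+s).choose s * (b+s).choose s) := by
          rw [step_eq a b s, ih]
      _ = ((a+s+1) * ((a+s).choose s)) * ((b+s+1) * ((b+s).choose s)) := by ring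
      _ = ((a+s+1).choose (s+1) * (s+1)) * ((b+s+1).choose (s+1) * (s+1)) := by
          rw [h1, h2]
      _ = (s+1)^2 * ((a+(s+1)).choose (s+1) * ((b+(s+1)).choose (s+1))) := by
          ring_nf
  -- done

private lemma main_aux (a b t : ℕ) :
    ∑ j ∈ range (t+1), (a+j).choose j * (b+j).choose j
    = ∑ j ∈ range (b+1),
        b.choose j * a.choose j * (t+a+b+1-j).choose (a+b+1) := by
  induction t with
  | zero =>
    rw [Finset.sum_range_one,
      Finset.sum_eq_single_of_mem 0 (Finset.mem_range.mpr (Nat.succ_pos b))]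
    · simp
    · intro j hj hj0
      have hjb : j ≤ b := Nat.lt_succ_iff.mp (Finset.mem_range.mp hj)
      have hz : (0+a+b+1-j).choose (a+b+1) = 0 := Nat.choose_eq_zero_of_lt (by omega)
      rw [hz, mul_zero]
  | succ t ih =>
    rw [Finset.sum_range_succ, ih]
    have expand : ∀ j ∈ range (b+1),
        b.choose j * a.choose j * (t+1+a+b+1-j).choose (a+b+1)
        = b.choose j * a.choose j * (t+a+b+1-j).choose (a+b+1)
          + a.choose j * b.choose j * (a+b+(t+1)-j).choose (a+b) := by
      intro j hj
      have hjb : j ≤ b := Nat.lt_succ_iff.mp (Finset.mem_range.mp hj)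
      rw [show t+1+a+b+1-j = (t+a+b+1-j)+1 from by omega,
        Nat.choose_succ_succ, show a+b+(t+1)-j = t+a+b+1-j from by omega]
      ring
    rw [Finset.sum_congr rfl expand, Finset.sum_add_distrib, suranyi a b (t+1)]

theorem ehrhart_minimal_matroid_sum (n k t : ℕ) (hk : 1 ≤ k) (hkn : k ≤ n - 1) :
    ∑ j ∈ Finset.range (t + 1), (n - k - 1 + j).choose j * (k - 1 + j).choose j =
      ∑ j ∈ Finset.range k,
        (k - 1).choose j * (n - k - 1).choose j * (t + n - 1 - j).choose (n - 1) := by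
  obtain ⟨b, rfl⟩ : ∃ b, k = b + 1 := ⟨k - 1, by omega⟩
  obtain ⟨a, rfl⟩ : ∃ a, n = a + b + 2 := ⟨n - b - 2, by omega⟩
  have e1 : a+b+2-(b+1)-1 = a := by omega
  have e2 : b+1-1 = b := by omega
  have e3 : t+(a+b+2)-1 = t+a+b+1 := by omega
  have e4 : a+b+2-1 = a+b+1 := by omega
  simp only [e1, e2, e3, e4]
  exact main_aux a b t
end

section
/- Let 1 ≤ k ≤ n-1 and let t be a nonnegative integer. Then the sum over j from 0 to t of C(n-k-1+j, j) * C(k-1+j, j) equals C(t+n-k, n-k) times the sum over j from 0 to k-1 of ((n-k)/(n-k+j)) * C(t, j) * C(k-1, j), where the latter sum is taken in the rationals. -/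
/-!
Expand `C(b+j, j) = ∑ᵢ C(b,i) C(j,i)` (Vandermonde), use trinomial revision
`C(a+j, j) C(j, i) = C(a+i, i) C(a+j, a+i)` and sum over `j` by the hockey-stick identity:
`∑_{j ≤ t} C(a+j, j) C(b+j, j) = ∑_{i ≤ b} C(b,i) C(a+i,i) C(a+t+1, a+i+1)`.
Revision once more, together with `(a+i+1) C(a+i, i) = (a+1) C(a+i+1, i)`, factors
`C(t+a+1, a+1)` out of each summand, leaving `(a+1)/(a+1+i) · C(t,i) C(b,i)`.
Here `a = n-k-1` and `b = k-1`.
-/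

open Finset

namespace Nat

theorem add_choose_eq_sum_choose_mul_choose (m n : ℕ) :
    (m + n).choose m = ∑ i ∈ range (m + 1), m.choose i * n.choose i := by
  rw [add_comm, add_choose_eq, Finset.Nat.sum_antidiagonal_eq_sum_range_succ_mk]
  refine sum_congr rfl fun i hi => ?_
  rw [choose_symm (mem_range_succ_iff.mp hi), mul_comm]

theorem choose_add_mul_choose (m n i : ℕ) :
    (m + n).choose (m + i) * (m + i).choose m = (m + n).choose m * n.choose i := by
  rcases le_or_gt i n with hin | hni
  · simpa using choose_mul (n := m + n) (k := m + i) (s := m) (by omega)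
  · rw [choose_eq_zero_of_lt (by omega : m + n < m + i), choose_eq_zero_of_lt hni]
    simp

theorem sum_range_add_choose_of_le {a c : ℕ} (h : a ≤ c) (t : ℕ) :
    ∑ j ∈ range (t + 1), (a + j).choose c = (a + t + 1).choose (c + 1) := by
  induction t with
  | zero => simp [choose_succ_succ', choose_eq_zero_of_lt (by omega : a < c + 1)]
  | succ t ih => rw [sum_range_succ, ih, ← add_assoc, choose_succ_succ' (a + t + 1), add_comm]

theorem sum_range_add_choose_mul_add_choose (a b t : ℕ) :
    ∑ j ∈ range (t + 1), (a + j).choose j * (b + j).choose j =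
      ∑ i ∈ range (b + 1), b.choose i * (a + i).choose i * (a + t + 1).choose (a + i + 1) :=
  calc ∑ j ∈ range (t + 1), (a + j).choose j * (b + j).choose j
      = ∑ j ∈ range (t + 1), ∑ i ∈ range (b + 1),
          b.choose i * ((a + j).choose j * j.choose i) := by
        refine sum_congr rfl fun j _ => ?_
        rw [← choose_symm_add (a := b), add_choose_eq_sum_choose_mul_choose, mul_sum]
        exact sum_congr rfl fun i _ => by ring
    _ = ∑ i ∈ range (b + 1), b.choose i *
          ∑ j ∈ range (t + 1), (a + i).choose i * (a + j).choose (a + i) := by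
        rw [sum_comm]
        refine sum_congr rfl fun i _ => ?_
        rw [mul_sum]
        refine sum_congr rfl fun j _ => ?_
        rw [← choose_symm_add, ← choose_add_mul_choose, choose_symm_add,
          mul_comm ((a + j).choose _)]
    _ = _ := by
        refine sum_congr rfl fun i _ => ?_
        rw [← mul_sum, sum_range_add_choose_of_le (by omega), mul_assoc]

theorem cast_add_choose_mul_choose_eq_choose_mul_div (a t i : ℕ) :
    ((a + i).choose i * (a + t + 1).choose (a + i + 1) : ℚ) =
      (t + (a + 1)).choose (a + 1) *
        (((a + 1 : ℕ) : ℚ) / ((a + 1 + i : ℕ) : ℚ) * t.choose i) := by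
  have absorption :
      ((a + 1 + i : ℕ) : ℚ) * (a + i).choose i = (a + 1 + i).choose (a + 1) * (a + 1) := by
    rw [← choose_symm_add, add_right_comm]
    exact_mod_cast add_one_mul_choose_eq (a + i) a
  have revision : ((a + 1 + t).choose (a + 1 + i) * (a + 1 + i).choose (a + 1) : ℚ) =
      (a + 1 + t).choose (a + 1) * t.choose i := by
    exact_mod_cast choose_add_mul_choose (a + 1) t i
  rw [show a + t + 1 = a + 1 + t by ring, show a + i + 1 = a + 1 + i by ring,
    show t + (a + 1) = a + 1 + t by ring]
  push_cast at absorption ⊢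
  field_simp
  linear_combination
    ((a + 1 + t).choose (a + 1 + i) : ℚ) * absorption + ((a : ℚ) + 1) * revision

theorem sum_range_add_choose_mul_add_choose_eq_mul_sum (a b t : ℕ) :
    (∑ j ∈ range (t + 1), ((a + j).choose j * (b + j).choose j : ℚ)) =
      ((t + (a + 1)).choose (a + 1) : ℚ) *
        ∑ j ∈ range (b + 1),
          ((a + 1 : ℕ) : ℚ) / ((a + 1 + j : ℕ) : ℚ) * t.choose j * b.choose j := by
  have h := congrArg (Nat.cast (R := ℚ)) (sum_range_add_choose_mul_add_choose a b t)
  push_cast at h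
  rw [h, mul_sum]
  refine sum_congr rfl fun j _ => ?_
  rw [mul_assoc, cast_add_choose_mul_choose_eq_choose_mul_div]
  ring

end Nat

theorem ehrhart_minimal_matroid_factorization (n k t : ℕ) (hk : 1 ≤ k) (hkn : k ≤ n - 1) :
    (∑ j ∈ Finset.range (t + 1),
        ((n - k - 1 + j).choose j * (k - 1 + j).choose j : ℚ)) =
      ((t + n - k).choose (n - k) : ℚ) *
        ∑ j ∈ Finset.range k,
          ((n - k : ℕ) : ℚ) / ((n - k + j : ℕ) : ℚ) *
            (t.choose j : ℚ) * ((k - 1).choose j : ℚ) := by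
  obtain ⟨a, ha⟩ : ∃ a, n - k = a + 1 := ⟨n - k - 1, by omega⟩
  obtain ⟨b, rfl⟩ : ∃ b, k = b + 1 := ⟨k - 1, by omega⟩
  rw [show n - (b + 1) - 1 = a by omega, show t + n - (b + 1) = t + (a + 1) by omega, ha,
    Nat.add_sub_cancel]
  exact Nat.sum_range_add_choose_mul_add_choose_eq_mul_sum a b t
end

section
/- Let 1 ≤ k ≤ n-1 and let t be a nonnegative integer. Then C(n-1, k-1) times the sum over j from 0 to k-1 of ((n-k)/(n-k+j)) * C(t, j) * C(k-1, j) equals the sum over j from 0 to k-1 of C(n-k-1+j, j) * C(t+j, j). -/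
/-!
Write `s = n - k - 1` and `K = k - 1`, so that `n - 1 = s + 1 + K`. Termwise,
`C(s+1+K, K) · (s+1)/(s+1+j) · C(K, j) = C(s+j, j) · C(s+1+K, K-j)`, which removes the
fractions. Expanding `C(t+j, j)` by Vandermonde and using `C(s+j, j) C(j, i) = C(s+i, i) C(s+j, j-i)`
turns the right-hand side into a double sum; exchanging the order of summation, the inner sum
`∑_{j=i}^{K} C(s+j, j-i)` collapses to `C(s+1+K, K-i)` by the hockey-stick identity.
-/

open Finset

namespace Nat

theorem sum_range_add_choose' (m n : ℕ) :
    ∑ l ∈ range (n + 1), (m + l).choose l = (m + n + 1).choose n := by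
  induction n with
  | zero => simp
  | succ n ih => rw [sum_range_succ, ih, ← add_assoc, choose_succ_succ (m + n + 1)]

theorem add_choose_mul_choose_eq (s : ℕ) {i j : ℕ} (hij : i ≤ j) :
    (s + j).choose j * j.choose i = (s + i).choose i * (s + j).choose (j - i) := by
  rw [← choose_symm hij, choose_mul (Nat.sub_le j i), Nat.sub_sub_self hij,
    show s + j - (j - i) = s + i by omega, Nat.mul_comm]

theorem add_choose_mul_add_choose_eq_sum (s t j : ℕ) :
    (s + j).choose j * (t + j).choose j =
      ∑ i ∈ range (j + 1), (s + i).choose i * t.choose i * (s + j).choose (j - i) := by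
  rw [add_choose_eq t j j,
    Finset.Nat.sum_antidiagonal_eq_sum_range_succ (fun a b ↦ t.choose a * j.choose b), mul_sum]
  refine sum_congr rfl fun i hi ↦ ?_
  have hij : i ≤ j := Nat.lt_succ_iff.mp (mem_range.mp hi)
  rw [choose_symm hij, ← Nat.mul_assoc, Nat.mul_right_comm, add_choose_mul_choose_eq s hij]
  ring

theorem sum_add_choose_mul_add_choose (s t K : ℕ) :
    ∑ j ∈ range (K + 1), (s + j).choose j * (t + j).choose j =
      ∑ i ∈ range (K + 1), (s + i).choose i * t.choose i * (s + 1 + K).choose (K - i) := by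
  calc ∑ j ∈ range (K + 1), (s + j).choose j * (t + j).choose j
      = ∑ j ∈ range (K + 1), ∑ i ∈ range (j + 1),
          (s + i).choose i * t.choose i * (s + i + (j - i)).choose (j - i) := by
        refine sum_congr rfl fun j _ ↦ ?_
        rw [add_choose_mul_add_choose_eq_sum]
        refine sum_congr rfl fun i hi ↦ ?_
        rw [show s + i + (j - i) = s + j by have := mem_range.mp hi; omega]
    _ = ∑ i ∈ range (K + 1), ∑ l ∈ range (K + 1 - i),
          (s + i).choose i * t.choose i * (s + i + l).choose l :=
        sum_range_diag_flip (K + 1) fun i l ↦ (s + i).choose i * t.choose i * (s + i + l).choose l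
    _ = _ := by
        refine sum_congr rfl fun i hi ↦ ?_
        have hiK : i ≤ K := Nat.lt_succ_iff.mp (mem_range.mp hi)
        rw [← mul_sum, show K + 1 - i = K - i + 1 by omega, sum_range_add_choose',
          show s + i + (K - i) + 1 = s + 1 + K by omega]

theorem choose_mul_choose_mul_add_one (s K : ℕ) {j : ℕ} (hj : j ≤ K) :
    (s + 1 + K).choose K * K.choose j * (s + 1) =
      (s + j).choose j * (s + 1 + K).choose (K - j) * (s + 1 + j) := by
  have h₁ : (s + 1 + K).choose K * K.choose (K - j) =
      (s + 1 + K).choose (K - j) * (s + 1 + j).choose j := by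
    rw [choose_mul (Nat.sub_le K j), show s + 1 + K - (K - j) = s + 1 + j by omega,
      Nat.sub_sub_self hj]
  have h₂ : (s + 1 + j).choose j * (s + 1) = (s + 1 + j) * (s + j).choose j := by
    rw [choose_symm_of_eq_add (show s + 1 + j = j + (s + 1) by omega), ← choose_symm_add,
      show s + 1 + j = s + j + 1 by omega, add_one_mul_choose_eq]
  rw [← choose_symm hj, h₁, Nat.mul_assoc, h₂]
  ring

end Nat

theorem choose_mul_sum_div_mul_choose_mul_choose (s K t : ℕ) :
    ((s + 1 + K).choose K : ℚ) *
        ∑ j ∈ range (K + 1),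
          ((s + 1 : ℕ) : ℚ) / ((s + 1 + j : ℕ) : ℚ) * (t.choose j : ℚ) * (K.choose j : ℚ) =
      ∑ j ∈ range (K + 1), ((s + j).choose j : ℚ) * ((t + j).choose j : ℚ) := by
  have hsum := congrArg (Nat.cast (R := ℚ)) (Nat.sum_add_choose_mul_add_choose s t K)
  push_cast at hsum
  rw [hsum, mul_sum]
  refine sum_congr rfl fun j hj ↦ ?_
  have hterm : ((s + 1 + K).choose K * K.choose j * (s + 1) : ℚ) =
      (s + j).choose j * (s + 1 + K).choose (K - j) * (s + 1 + j) := by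
    exact_mod_cast Nat.choose_mul_choose_mul_add_one s K (Nat.lt_succ_iff.mp (mem_range.mp hj))
  push_cast
  field_simp
  linear_combination (t.choose j : ℚ) * hterm

theorem remaining_factor_identity (n k t : ℕ) (hk : 1 ≤ k) (hkn : k ≤ n - 1) :
    ((n - 1).choose (k - 1) : ℚ) *
        ∑ j ∈ Finset.range k,
          ((n - k : ℕ) : ℚ) / ((n - k + j : ℕ) : ℚ) *
            (t.choose j : ℚ) * ((k - 1).choose j : ℚ) =
      ∑ j ∈ Finset.range k,
        ((n - k - 1 + j).choose j : ℚ) * ((t + j).choose j : ℚ) := by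
  obtain ⟨K, rfl⟩ : ∃ K, k = K + 1 := ⟨k - 1, by omega⟩
  obtain ⟨s, hs⟩ : ∃ s, n - (K + 1) = s + 1 := ⟨n - (K + 1) - 1, by omega⟩
  rw [hs, show n - 1 = s + 1 + K by omega, Nat.add_sub_cancel, Nat.add_sub_cancel]
  exact choose_mul_sum_div_mul_choose_mul_choose s K t
end

section
/- Let 1 ≤ k ≤ n-1 and let t be a nonnegative integer. Then C(n-1, k-1) times the sum over j from 0 to t of C(n-k-1+j, j) * C(k-1+j, j) equals C(t+n-k, n-k) times the sum over j from 0 to k-1 of C(n-k-1+j, j) * C(t+j, j). -/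
lemma sym (x y : ℕ) : (x+y).choose x = (x+y).choose y := by
  have := Nat.choose_symm (Nat.le_add_right x y)
  simpa [Nat.add_sub_cancel_left] using this.symm

lemma chq (x y : ℕ) : (((x + y).choose y : ℕ) : ℚ)
    = (x+y).factorial / (y.factorial * x.factorial) := by
  rw [Nat.cast_choose ℚ (Nat.le_add_left y x)]
  simp [Nat.add_sub_cancel]

lemma key (a b t : ℕ) :
    (t+b+2).choose (b+1) * ((b+a+1).choose (a+1) * (t+a+2).choose (a+1)) +
      (a+b+1).choose (b+1) * ((b+t+1).choose (t+1) * (a+t+1).choose (t+1)) =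
    (t+b+1).choose (b+1) * ((b+a+1).choose (a+1) * (t+a+1).choose (a+1)) +
      (a+b+2).choose (b+1) * ((b+t+1).choose (t+1) * (a+t+2).choose (t+1)) := by
  rw [show t+b+2 = (t+1)+(b+1) from by ring, show b+a+1 = b+(a+1) from by ring,
    show t+a+2 = (t+1)+(a+1) from by ring, show a+b+1 = a+(b+1) from by ring,
    show b+t+1 = b+(t+1) from by ring, show a+t+1 = a+(t+1) from by ring,
    show t+b+1 = t+(b+1) from by ring, show t+a+1 = t+(a+1) from by ring,
    show a+b+2 = (a+1)+(b+1) from by ring, show a+t+2 = (a+1)+(t+1) from by ring]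
  qify
  rw [chq, chq, chq, chq, chq, chq, chq, chq, chq, chq]
  rw [show (t+1)+(b+1) = (t+(b+1))+1 from by ring, show b+(a+1) = (a+b)+1 from by ring,
    show (t+1)+(a+1) = (a+(t+1))+1 from by ring, show a+(b+1) = (a+b)+1 from by ring,
    show b+(t+1) = (b+t)+1 from by ring, show a+(t+1) = (a+t)+1 from by ring,
    show t+(b+1) = (b+t)+1 from by ring, show t+(a+1) = (a+t)+1 from by ring,
    show (a+1)+(b+1) = ((a+b)+1)+1 from by ring, show (a+1)+(t+1) = ((a+t)+1)+1 from by ring]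
  simp only [Nat.factorial_succ]
  have hne : ∀ m : ℕ, ((m.factorial : ℕ) : ℚ) ≠ 0 :=
    fun m => Nat.cast_ne_zero.2 m.factorial_ne_zero
  have h1 := hne a; have h2 := hne b; have h3 := hne t
  have h4 := hne (a+b); have h5 := hne (a+t); have h6 := hne (b+t)
  push_cast
  field_simp
  ring

lemma hockey (b : ℕ) : ∀ a : ℕ,
    ∑ j ∈ Finset.range (a+1), (b+j).choose j = (a+b+1).choose (b+1) := by
  intro a
  induction a with
  | zero => simp
  | succ a ih =>
      rw [Finset.sum_range_succ, ih]
      have p : (a+1+b+1).choose (b+1) = (a+b+1).choose b + (a+b+1).choose (b+1) := by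
        rw [show a+1+b+1 = (a+b+1)+1 from by ring]; exact Nat.choose_succ_succ' _ _
      have q : (b+(a+1)).choose (a+1) = (a+b+1).choose b := by
        rw [show b+(a+1) = a+b+1 from by ring]
        have h := sym b (a+1)
        rw [show b+(a+1) = a+b+1 from by ring] at h
        omega
      omega

lemma inner (b t : ℕ) : ∀ a : ℕ,
    (t+b+2).choose (b+1) * ∑ j ∈ Finset.range (a+1), (b+j).choose j * (t+1+j).choose j =
    (t+b+1).choose (b+1) * ∑ j ∈ Finset.range (a+1), (b+j).choose j * (t+j).choose j +
      (a+b+1).choose (b+1) * ((b+t+1).choose (t+1) * (a+t+1).choose (t+1)) := by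
  intro a
  induction a with
  | zero =>
      simp only [zero_add, Finset.sum_range_one, Nat.add_zero, Nat.choose_zero_right,
        Nat.choose_self, mul_one, one_mul]
      rw [show b+t+1 = t+b+1 from by ring]
      have p : (t+b+2).choose (b+1) = (t+b+1).choose b + (t+b+1).choose (b+1) := by
        rw [show t+b+2 = (t+b+1)+1 from by ring]; exact Nat.choose_succ_succ' _ _
      have q : (t+b+1).choose b = (t+b+1).choose (t+1) := by
        have h := sym (t+1) b
        rw [show t+1+b = t+b+1 from by ring] at h
        omega
      omega
  | succ a ih =>
      rw [Finset.sum_range_succ, Finset.sum_range_succ (n := a+1), Nat.mul_add, Nat.mul_add, ih]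
      have k := key a b t
      rw [show b+(a+1) = b+a+1 from by ring, show t+1+(a+1) = t+a+2 from by ring,
        show t+(a+1) = t+a+1 from by ring, show a+1+b+1 = a+b+2 from by ring,
        show a+1+t+1 = a+t+2 from by ring]
      omega

lemma main (a b t : ℕ) :
    (a+b+1).choose a * ∑ j ∈ Finset.range (t+1), (b+j).choose j * (a+j).choose j =
    (t+b+1).choose (b+1) * ∑ j ∈ Finset.range (a+1), (b+j).choose j * (t+j).choose j := by
  have hsym : (a+b+1).choose a = (a+b+1).choose (b+1) := by
    rw [show a+b+1 = a+(b+1) from by ring, sym a (b+1)]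
  rw [hsym]
  induction t with
  | zero =>
      simp only [zero_add, Finset.sum_range_one, Nat.add_zero, Nat.choose_zero_right,
        Nat.choose_self, mul_one, one_mul]
      exact (hockey b a).symm
  | succ t ih =>
      rw [Finset.sum_range_succ, Nat.mul_add, ih]
      have := inner b t a
      rw [show b+(t+1) = b+t+1 from by ring, show a+(t+1) = a+t+1 from by ring,
        show t+1+b+1 = t+b+2 from by ring]
      omega

theorem ehrhart_minimal_matroid_product_form (n k t : ℕ) (hk : 1 ≤ k) (hkn : k ≤ n - 1) :
    (n - 1).choose (k - 1) *
        ∑ j ∈ Finset.range (t + 1), (n - k - 1 + j).choose j * (k - 1 + j).choose j =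
      (t + n - k).choose (n - k) *
        ∑ j ∈ Finset.range k, (n - k - 1 + j).choose j * (t + j).choose j := by
  obtain ⟨a, rfl⟩ : ∃ a, k = a + 1 := ⟨k - 1, by omega⟩
  obtain ⟨b, rfl⟩ : ∃ b, n = a + b + 2 := ⟨n - a - 2, by omega⟩
  have e1 : a + b + 2 - 1 = a + b + 1 := by omega
  have e2 : a + 1 - 1 = a := by omega
  have e3 : a + b + 2 - (a + 1) - 1 = b := by omega
  have e4 : t + (a + b + 2) - (a + 1) = t + b + 1 := by omega
  have e5 : a + b + 2 - (a + 1) = b + 1 := by omega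
  rw [e1, e2, e3, e4, e5]
  exact main a b t
end

section
/- Let 1 ≤ k ≤ n-1. Define the polynomial D(t) = (1/C(n-1,k-1)) * C(t+n-k, n-k) * (sum over j from 0 to k-1 of C(n-k-1+j, j) * C(t+j, j)), viewed as a polynomial in t with rational coefficients, where C(t+a, a) denotes the polynomial (t+a)(t+a-1)...(t+1)/a!. Then all coefficients of D(t) are positive. -/
/-!
Call a polynomial positive up to degree `d` if its coefficients are nonnegative and those of
degree `≤ d` are positive. This is preserved by positive scalars, and multiplying polynomials
positive up to degrees `d` and `e` gives one positive up to degree `d + e`. Hence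
`C(t+a, a) = (t+1)⋯(t+a)/a!` is positive up to degree `a`, the sum in `D` is positive up to
degree `k-1` thanks to its last term, and `D` is positive up to degree `(n-k) + (k-1) = n-1`.
-/

open Polynomial

/-- The polynomial binomial coefficient `C(t+a, a) = (t+1)(t+2)⋯(t+a)/a!`. -/
noncomputable def binomPoly (a : ℕ) : Polynomial ℚ :=
  (a.factorial : ℚ)⁻¹ • ((ascPochhammer ℚ a).comp (Polynomial.X + 1))

/-- The Ehrhart polynomial of the minimal matroid `T_{k,n}`. -/
noncomputable def minD (n k : ℕ) : Polynomial ℚ :=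
  (((n - 1).choose (k - 1) : ℚ))⁻¹ •
    (binomPoly (n - k) *
      ∑ j ∈ Finset.range k, ((n - k - 1 + j).choose j : ℚ) • binomPoly j)

namespace Polynomial

section PosCoeffsUpTo

variable {R : Type*} [Semiring R] [PartialOrder R]

def PosCoeffsUpTo (p : R[X]) (d : ℕ) : Prop :=
  (∀ m, 0 ≤ p.coeff m) ∧ ∀ m ≤ d, 0 < p.coeff m

variable {p q : R[X]} {d e : ℕ}

variable [IsStrictOrderedRing R]

theorem PosCoeffsUpTo.smul {c : R} (hp : PosCoeffsUpTo p d) (hc : 0 < c) :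
    PosCoeffsUpTo (c • p) d := by
  refine ⟨fun m => ?_, fun m hm => ?_⟩ <;> rw [coeff_smul, smul_eq_mul]
  · exact mul_nonneg hc.le (hp.1 m)
  · exact mul_pos hc (hp.2 m hm)

/-- Each coefficient of `p * q` with index `m ≤ d + e` contains the positive summand
`p.coeff i * q.coeff (m - i)`, `i = min m d`, and all other summands are nonnegative. -/
theorem PosCoeffsUpTo.mul (hp : PosCoeffsUpTo p d) (hq : PosCoeffsUpTo q e) :
    PosCoeffsUpTo (p * q) (d + e) := by
  have hterm : ∀ x : ℕ × ℕ, 0 ≤ p.coeff x.1 * q.coeff x.2 :=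
    fun x => mul_nonneg (hp.1 _) (hq.1 _)
  refine ⟨fun m => ?_, fun m hm => ?_⟩ <;> rw [coeff_mul]
  · exact Finset.sum_nonneg fun x _ => hterm x
  · refine Finset.sum_pos' (fun x _ => hterm x) ⟨(min m d, m - min m d), ?_, ?_⟩
    · exact Finset.HasAntidiagonal.mem_antidiagonal.mpr (by omega)
    · exact mul_pos (hp.2 _ (min_le_right m d)) (hq.2 _ (by omega))

theorem posCoeffsUpTo_sum {ι : Type*} {s : Finset ι} {f : ι → R[X]}
    (hf : ∀ i ∈ s, ∀ m, 0 ≤ (f i).coeff m) {i : ι} (hi : i ∈ s)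
    (hfi : PosCoeffsUpTo (f i) d) : PosCoeffsUpTo (∑ j ∈ s, f j) d := by
  refine ⟨fun m => ?_, fun m hm => ?_⟩ <;> rw [finsetSum_coeff]
  · exact Finset.sum_nonneg fun j hj => hf j hj m
  · exact Finset.sum_pos' (fun j hj => hf j hj m) ⟨i, hi, hfi.2 m hm⟩

theorem posCoeffsUpTo_one : PosCoeffsUpTo (1 : R[X]) 0 :=
  ⟨fun m => by rw [coeff_one]; split_ifs <;> simp, fun m hm => by simp [Nat.le_zero.mp hm]⟩

theorem posCoeffsUpTo_X_add_C {c : R} (hc : 0 < c) : PosCoeffsUpTo (X + C c) 1 := by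
  refine ⟨fun m => ?_, fun m hm => ?_⟩
  · rcases m with _ | _ | m <;> simp [coeff_X, hc.le]
  · interval_cases m <;> simp [hc]

theorem posCoeffsUpTo_ascPochhammer_comp_X_add_one {S : Type*} [CommSemiring S] [PartialOrder S]
    [IsStrictOrderedRing S] (a : ℕ) : PosCoeffsUpTo ((ascPochhammer S a).comp (X + 1)) a := by
  induction a with
  | zero => simpa using posCoeffsUpTo_one
  | succ a ih =>
    have hstep : (ascPochhammer S (a + 1)).comp (X + 1) =
        (ascPochhammer S a).comp (X + 1) * (X + C ((a : S) + 1)) := by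
      rw [ascPochhammer_succ_right, mul_comp, add_comp, X_comp, natCast_comp, C_add, C_1,
        ← map_natCast C]
      ring
    rw [hstep]
    exact ih.mul (posCoeffsUpTo_X_add_C (Nat.cast_add_one_pos a))

end PosCoeffsUpTo

end Polynomial

theorem binomPoly_posCoeffsUpTo (a : ℕ) : PosCoeffsUpTo (binomPoly a) a :=
  (posCoeffsUpTo_ascPochhammer_comp_X_add_one a).smul (by positivity)

/-- All coefficients of the Ehrhart polynomial of the minimal matroid are positive
(the polynomial has degree n-1). -/
theorem minD_coeff_pos (n k : ℕ) (hk : 1 ≤ k) (hkn : k ≤ n - 1) :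
    ∀ m ≤ n - 1, 0 < (minD n k).coeff m := by
  have hsum : PosCoeffsUpTo
      (∑ j ∈ Finset.range k, ((n - k - 1 + j).choose j : ℚ) • binomPoly j) (k - 1) := by
    refine posCoeffsUpTo_sum (fun j _ => ?_) (Finset.mem_range.mpr (by omega : k - 1 < k)) ?_
    · exact ((binomPoly_posCoeffsUpTo j).smul (Nat.cast_pos.mpr (Nat.choose_pos (by omega)))).1
    · exact (binomPoly_posCoeffsUpTo (k - 1)).smul (Nat.cast_pos.mpr (Nat.choose_pos (by omega)))
  have hprod := (binomPoly_posCoeffsUpTo (n - k)).mul hsum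
  rw [show n - k + (k - 1) = n - 1 by omega] at hprod
  have hchoose : 0 < (n - 1).choose (k - 1) := Nat.choose_pos (by omega)
  exact (hprod.smul (by positivity)).2
end

section
/- Let 1 ≤ k ≤ n-1. Define D(t) = (1/C(n-1,k-1)) * C(t+n-k, n-k) * (sum over j from 0 to k-1 of C(n-k-1+j, j) * C(t+j, j)) as a polynomial in t over the rationals, where C(t+a, a) = (t+1)(t+2)...(t+a)/a!. Then all coefficients of the polynomial D(t-1) are nonnegative. -/
open Polynomial

/-!
Shifting `t ↦ t - 1` turns `C(t+a, a)` into `t(t+1)⋯(t+a-1)/a!`, a rising factorial with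
nonnegative coefficients. `D(t-1)` is then built from such polynomials by products, sums and
scaling by nonnegative rationals, all of which preserve nonnegativity of the coefficients.
-/

namespace Polynomial

section NonnegCoeffs

variable (R : Type*) [Semiring R] [PartialOrder R] [IsOrderedRing R]

def nonnegCoeffs : Subsemiring R[X] where
  carrier := {p | ∀ n, 0 ≤ p.coeff n}
  mul_mem' {p q} hp hq n := by
    rw [coeff_mul]
    exact Finset.sum_nonneg fun x _ => mul_nonneg (hp x.1) (hq x.2)
  one_mem' n := by
    rw [coeff_one]
    split_ifs <;> simp
  add_mem' {p q} hp hq n := by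
    rw [coeff_add]
    exact add_nonneg (hp n) (hq n)
  zero_mem' n := by simp

variable {R}

theorem mem_nonnegCoeffs {p : R[X]} : p ∈ nonnegCoeffs R ↔ ∀ n, 0 ≤ p.coeff n :=
  Iff.rfl

theorem X_mem_nonnegCoeffs : (X : R[X]) ∈ nonnegCoeffs R := fun n => by
  rw [coeff_X]
  split_ifs <;> simp

theorem C_mem_nonnegCoeffs {c : R} (hc : 0 ≤ c) : C c ∈ nonnegCoeffs R := fun n => by
  rw [coeff_C]
  split_ifs <;> simp [hc]

theorem smul_mem_nonnegCoeffs {c : R} (hc : 0 ≤ c) {p : R[X]} (hp : p ∈ nonnegCoeffs R) :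
    c • p ∈ nonnegCoeffs R := by
  rw [smul_eq_C_mul]
  exact mul_mem (C_mem_nonnegCoeffs hc) hp

theorem ascPochhammer_mem_nonnegCoeffs (n : ℕ) : ascPochhammer R n ∈ nonnegCoeffs R := by
  induction n with
  | zero => exact one_mem (nonnegCoeffs R)
  | succ n ih =>
    rw [ascPochhammer_succ_right]
    exact mul_mem ih (add_mem X_mem_nonnegCoeffs (natCast_mem _ n))

end NonnegCoeffs

end Polynomial

theorem binomPoly_comp_X_sub_one (a : ℕ) :
    (binomPoly a).comp (X - 1) = (a.factorial : ℚ)⁻¹ • ascPochhammer ℚ a := by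
  rw [binomPoly, smul_comp, comp_assoc]
  simp

theorem binomPoly_comp_X_sub_one_mem_nonnegCoeffs (a : ℕ) :
    (binomPoly a).comp (X - 1) ∈ nonnegCoeffs ℚ := by
  rw [binomPoly_comp_X_sub_one]
  exact smul_mem_nonnegCoeffs (by positivity) (ascPochhammer_mem_nonnegCoeffs a)

theorem minD_shift_coeff_nonneg_general (n k : ℕ) :
    ∀ m, 0 ≤ ((minD n k).comp (Polynomial.X - 1)).coeff m := by
  rw [← mem_nonnegCoeffs, minD, smul_comp, mul_comp, sum_comp]
  refine smul_mem_nonnegCoeffs (by positivity)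
    (mul_mem (binomPoly_comp_X_sub_one_mem_nonnegCoeffs _) (sum_mem fun j _ => ?_))
  rw [smul_comp]
  exact smul_mem_nonnegCoeffs (by positivity) (binomPoly_comp_X_sub_one_mem_nonnegCoeffs j)

/-- All coefficients of `D(t-1)` are nonnegative. -/
theorem minD_shift_coeff_nonneg (n k : ℕ) (hk : 1 ≤ k) (hkn : k ≤ n - 1) :
    ∀ m, 0 ≤ ((minD n k).comp (Polynomial.X - 1)).coeff m :=
  minD_shift_coeff_nonneg_general n k
end

section
/- Let r ≤ s be nonnegative integers. The polynomial P(x) = sum over j from 0 to r of C(r, j) * C(s, j) * x^j has only real roots (i.e., it splits over the reals). -/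
open Polynomial

private lemma splits_derivative_real (p : ℝ[X]) (hp : p.Splits) :
    (derivative p).Splits := by
  by_cases hd : derivative p = 0
  · rw [hd]; exact Splits.zero
  · have hpos : 0 < p.natDegree := by
      rcases Nat.eq_zero_or_pos p.natDegree with h | h
      · exact absurd (by rw [p.eq_C_of_natDegree_le_zero h.le]; simp) hd
      · exact h
    have hdd : (derivative p).natDegree = p.natDegree - 1 :=
      natDegree_eq_of_degree_eq_some (degree_derivative_eq p hpos)
    rw [splits_iff_card_roots] at hp ⊢
    have h1 := p.card_roots_le_derivative
    have h2 := (derivative p).card_roots'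
    omega

private lemma splits_iterate_derivative_real (p : ℝ[X]) (hp : p.Splits) (k : ℕ) :
    (derivative^[k] p).Splits := by
  induction k with
  | zero => exact hp
  | succ k ih =>
    rw [Function.iterate_succ_apply']
    exact splits_derivative_real _ ih

private lemma splits_multiset_prod_real (m : Multiset ℝ[X])
    (h : ∀ p ∈ m, p.Splits) : m.prod.Splits := by
  induction m using Multiset.induction_on with
  | empty => simpa using (Splits.one : Splits (1 : ℝ[X]))
  | cons a s ih =>
    rw [Multiset.prod_cons]
    exact Splits.mul (h a (Multiset.mem_cons_self a s))
      (ih fun p hp => h p (Multiset.mem_cons_of_mem hp))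

private lemma hstar_nat_coeff {r s i : ℕ} (hi : i ≤ r) :
    r.choose i * (r.descFactorial (r - i) * s.descFactorial i)
      = r.factorial * (r.choose i * s.choose i) := by
  rw [Nat.descFactorial_eq_factorial_mul_choose, Nat.descFactorial_eq_factorial_mul_choose,
    Nat.choose_symm hi, ← Nat.choose_mul_factorial_mul_factorial hi]
  ring

/-- The h*-polynomial ∑ⱼ C(r,j) C(s,j) xʲ (with r ≤ s) has only real roots,
i.e. it splits over ℝ. -/
theorem hstar_real_rooted (r s : ℕ) (hrs : r ≤ s) :
    Polynomial.Splits
      (∑ j ∈ Finset.range (r + 1),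
        Polynomial.C ((r.choose j * s.choose j : ℕ) : ℝ) * Polynomial.X ^ j) := by
  set c : ℕ → ℝ := fun j => ((r.choose j * s.choose j : ℕ) : ℝ) with hc
  set G : ℝ[X] := ∑ j ∈ Finset.range (r + 1), C (c j) * (X ^ j * (X + C 1) ^ (r - j))
    with hG
  -- the key Rodrigues-type identity
  have key : derivative^[r] ((X : ℝ[X]) ^ r * (X + C 1) ^ s)
      = C (r.factorial : ℝ) * ((X + C 1) ^ (s - r) * G) := by
    rw [iterate_derivative_mul, hG, Finset.mul_sum, Finset.mul_sum]
    refine Finset.sum_congr rfl fun i hi => ?_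
    have hir : i ≤ r := Nat.lt_succ_iff.mp (Finset.mem_range.mp hi)
    rw [iterate_derivative_X_pow_eq_smul, iterate_derivative_X_add_pow]
    have e1 : r - (r - i) = i := by omega
    rw [e1, show s - i = (s - r) + (r - i) by omega, pow_add]
    have hcoef : ((r.choose i : ℝ)) * ((r.descFactorial (r - i) : ℝ) * (s.descFactorial i : ℝ))
        = (r.factorial : ℝ) * c i := by
      have hn := hstar_nat_coeff (s := s) hir
      simp only [hc]
      exact_mod_cast congrArg (fun n : ℕ => (n : ℝ)) hn
    have hcoefC := congrArg C hcoef
    simp only [map_mul] at hcoefC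
    simp only [smul_eq_C_mul, nsmul_eq_mul, ← C_eq_natCast]
    linear_combination (X ^ i * ((X + C 1) ^ (s - r) * (X + C 1) ^ (r - i))) * hcoefC
  -- the big polynomial splits, hence so does G
  have hF : ((X : ℝ[X]) ^ r * (X + C 1) ^ s).Splits :=
    Splits.mul (Splits.X_pow r)
      ((Splits.of_degree_le_one (degree_X_add_C (1 : ℝ)).le).pow s)
  have hH := splits_iterate_derivative_real _ hF r
  rw [key] at hH
  have hGeval0 : G.eval 0 = 1 := by
    rw [hG, eval_finset_sum, Finset.sum_eq_single 0]
    · simp [hc]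
    · intro j hj hj0
      simp [zero_pow hj0]
    · intro h
      exact absurd (Finset.mem_range.mpr (Nat.succ_pos r)) h
  have hG0 : G ≠ 0 := by
    intro h
    rw [h] at hGeval0
    simp at hGeval0
  have hX1 : ((X : ℝ[X]) + C 1) ≠ 0 := by
    intro h
    have := congrArg (eval 0) h
    simp at this
  have hGsplits : G.Splits := by
    have hne1 : (C (r.factorial : ℝ) * ((X + C 1) ^ (s - r) * G)).map (RingHom.id ℝ) ≠ 0 := by
      rw [Polynomial.map_id]
      exact mul_ne_zero (by simp [Nat.factorial_ne_zero]) (mul_ne_zero (pow_ne_zero _ hX1) hG0)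
    have h1 := Splits.of_dvd hH (by rwa [Polynomial.map_id] at hne1) (dvd_mul_left _ _)
    have hne2 : (((X : ℝ[X]) + C 1) ^ (s - r) * G).map (RingHom.id ℝ) ≠ 0 := by
      rw [Polynomial.map_id]
      exact mul_ne_zero (pow_ne_zero _ hX1) hG0
    exact Splits.of_dvd h1 (by rwa [Polynomial.map_id] at hne2) (dvd_mul_left _ _)
  -- the degree of G is r
  have hmon : ∀ j, j ∈ Finset.range (r + 1) →
      ((X : ℝ[X]) ^ j * (X + C 1) ^ (r - j)).Monic ∧
        ((X : ℝ[X]) ^ j * (X + C 1) ^ (r - j)).natDegree = r := by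
    intro j hj
    have hjr : j ≤ r := Nat.lt_succ_iff.mp (Finset.mem_range.mp hj)
    have hm : ((X : ℝ[X]) ^ j * (X + C 1) ^ (r - j)).Monic :=
      (monic_X_pow j).mul ((monic_X_add_C (1 : ℝ)).pow _)
    refine ⟨hm, ?_⟩
    rw [(monic_X_pow j).natDegree_mul ((monic_X_add_C (1 : ℝ)).pow _), natDegree_X_pow,
      natDegree_pow, natDegree_X_add_C, mul_one]
    omega
  have hcoeffG : G.coeff r = ∑ j ∈ Finset.range (r + 1), c j := by
    rw [hG, finset_sum_coeff]
    refine Finset.sum_congr rfl fun j hj => ?_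
    have h1 := (hmon j hj).1.coeff_natDegree
    rw [(hmon j hj).2] at h1
    rw [coeff_C_mul, h1, mul_one]
  have hsum_pos : 0 < ∑ j ∈ Finset.range (r + 1), c j := by
    refine Finset.sum_pos' (fun j _ => by positivity) ⟨0, Finset.mem_range.mpr (Nat.succ_pos r), ?_⟩
    simp [hc]
  have hdegG : G.natDegree = r := by
    refine le_antisymm ?_ ?_
    · rw [hG]
      refine natDegree_sum_le_of_forall_le _ _ fun j hj => ?_
      exact (natDegree_C_mul_le _ _).trans (hmon j hj).2.le
    · exact le_natDegree_of_ne_zero (by rw [hcoeffG]; exact hsum_pos.ne')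
  -- factor G over its real roots
  have hcard : Multiset.card G.roots = r := (splits_iff_card_roots.mp hGsplits).trans hdegG
  have hGfact := hGsplits.eq_prod_roots
  set Q : ℝ[X] := C G.leadingCoeff * (G.roots.map fun t => C (1 + t) * X - C t).prod with hQ
  have hQsplits : Q.Splits := by
    refine Splits.mul (Splits.C _) (splits_multiset_prod_real _ fun p hp => ?_)
    obtain ⟨t, _, rfl⟩ := Multiset.mem_map.mp hp
    refine Splits.of_natDegree_le_one ?_
    calc (C (1 + t) * X - C t).natDegree = (C (1 + t) * X + C (-t)).natDegree := by
          rw [map_neg, sub_eq_add_neg]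
      _ ≤ 1 := natDegree_linear_le
  -- the statement polynomial equals Q
  have hPQ : (∑ j ∈ Finset.range (r + 1),
      C ((r.choose j * s.choose j : ℕ) : ℝ) * X ^ j) = Q := by
    apply eq_of_infinite_eval_eq
    have hinf : ({(1 : ℝ)}ᶜ : Set ℝ).Infinite :=
      Set.Finite.infinite_compl (Set.finite_singleton 1)
    refine hinf.mono fun y hy => ?_
    have hy1 : y ≠ 1 := hy
    set x : ℝ := y / (1 - y) with hxdef
    have h1y : (1 : ℝ) - y ≠ 0 := sub_ne_zero.mpr (Ne.symm hy1)
    have hx1 : x * (1 - y) = y := div_mul_cancel₀ _ h1y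
    have hx2 : (1 + x) * (1 - y) = 1 := by
      rw [hxdef]
      field_simp
      ring
    have hGx : eval x G = G.leadingCoeff * (G.roots.map fun t => x - t).prod := by
      conv_lhs => rw [hGfact]
      rw [eval_mul, eval_C, eval_multiset_prod, Multiset.map_map]
      simp [Function.comp]
    have hGx2 : eval x G = ∑ j ∈ Finset.range (r + 1), c j * (x ^ j * (1 + x) ^ (r - j)) := by
      rw [hG, eval_finset_sum]
      refine Finset.sum_congr rfl fun j _ => ?_
      simp [add_comm]
    have hP : eval y (∑ j ∈ Finset.range (r + 1),
        C ((r.choose j * s.choose j : ℕ) : ℝ) * X ^ j) = (1 - y) ^ r * eval x G := by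
      rw [hGx2, eval_finset_sum, Finset.mul_sum]
      refine Finset.sum_congr rfl fun j hj => ?_
      have hjr : j ≤ r := Nat.lt_succ_iff.mp (Finset.mem_range.mp hj)
      have e3 : (1 - y) ^ r = (1 - y) ^ j * (1 - y) ^ (r - j) := by
        rw [← pow_add]
        congr 1
        omega
      simp only [eval_mul, eval_C, eval_pow, eval_X]
      rw [e3]
      calc ((r.choose j * s.choose j : ℕ) : ℝ) * y ^ j
          = c j * ((x * (1 - y)) ^ j * (((1 + x) * (1 - y)) ^ (r - j))) := by
            rw [hx1, hx2, one_pow, mul_one, hc]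
        _ = (1 - y) ^ j * (1 - y) ^ (r - j) * (c j * (x ^ j * (1 + x) ^ (r - j))) := by
            rw [mul_pow, mul_pow]
            ring
    have hQe : eval y Q = (1 - y) ^ r * eval x G := by
      rw [hQ, eval_mul, eval_C, eval_multiset_prod, Multiset.map_map, hGx]
      have hmc : G.roots.map (fun t => eval y (C (1 + t) * X - C t))
          = G.roots.map (fun t => (x - t) * (1 - y)) := by
        refine Multiset.map_congr rfl fun t _ => ?_
        simp only [eval_sub, eval_mul, eval_C, eval_X]
        linear_combination -hx1
      rw [show (eval y ∘ fun t => C (1 + t) * X - C t) = fun t => eval y (C (1 + t) * X - C t)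
        from rfl, hmc, Multiset.prod_map_mul, Multiset.map_const', Multiset.prod_replicate, hcard]
      ring
    exact hP.trans hQe.symm
  rw [hPQ]
  exact hQsplits
end

section
/- Let k < n be positive integers. The polytope P in R^n defined by the conditions 0 ≤ x_i ≤ 1 for all i, x_1 + ... + x_n = k, and x_{k+1} + ... + x_n ≤ 1, has exactly k*(n-k) + 1 vertices, namely the indicator vectors of the following subsets of {1,...,n}: the set {1,...,k}, and the sets ({1,...,k} \ {i}) ∪ {j} for 1 ≤ i ≤ k and k+1 ≤ j ≤ n. -/
/-!
A point of the polytope with a coordinate in `(0, 1)` has a second such coordinate, because the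
coordinate sum is an integer. If the tail constraint is tight, the tail sum and the head sum are
integers as well, so the second fractional coordinate can be taken on the same side as the first.
Shifting `ε` between the two coordinates, in either direction, stays in the polytope, so the point
is not extreme. Hence the vertices are exactly the 0/1 points: the indicator vectors of the
`k`-sets meeting `{k, …, n-1}` at most once, i.e. of `{0, …, k-1}` and its single exchanges.
-/

open Finset

theorem notMem_extremePoints_of_add_mem_of_sub_mem {E : Type*} [AddCommGroup E] [Module ℝ E]
    {A : Set E} {x d : E} (hd : d ≠ 0) (hadd : x + d ∈ A) (hsub : x - d ∈ A) :
    x ∉ A.extremePoints ℝ := by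
  intro hx
  have hmid : x ∈ openSegment ℝ (x + d) (x - d) :=
    ⟨1 / 2, 1 / 2, by norm_num, by norm_num, by norm_num, by module⟩
  exact hd (by simpa using hx.2 hadd hsub hmid)

theorem sum_eq_card_filter_of_forall_eq_zero_or_eq_one {ι : Type*} {S : Finset ι} {x : ι → ℝ}
    (h : ∀ i ∈ S, x i = 0 ∨ x i = 1) : ∑ i ∈ S, x i = #{i ∈ S | x i = 1} := by
  rw [← sum_boole]
  refine sum_congr rfl fun i hi => ?_
  rcases h i hi with h0 | h1 <;> simp [*]

theorem exists_ne_mem_Ioo_of_sum_eq_intCast {ι : Type*} [DecidableEq ι] {S : Finset ι}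
    {x : ι → ℝ} (hx : ∀ i ∈ S, x i ∈ Set.Icc 0 1) {m : ℤ} (hS : ∑ i ∈ S, x i = m) {i : ι}
    (hi : i ∈ S) (hxi : x i ∈ Set.Ioo 0 1) : ∃ j ∈ S, j ≠ i ∧ x j ∈ Set.Ioo 0 1 := by
  by_contra! hrest
  have h01 : ∀ j ∈ S.erase i, x j = 0 ∨ x j = 1 := fun j hj => by
    obtain ⟨hji, hjS⟩ := mem_erase.1 hj
    simpa using (Set.Icc_sdiff_Ioo_same (zero_le_one' ℝ) ▸ ⟨hx j hjS, hrest j hjS hji⟩ :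
      x j ∈ ({0, 1} : Set ℝ))
  set c := #{j ∈ S.erase i | x j = 1}
  have hxi_eq : x i = m - c := by
    rw [← hS, ← add_sum_erase S x hi, sum_eq_card_filter_of_forall_eq_zero_or_eq_one h01]
    ring
  have hlo : (c : ℤ) < m := (Int.cast_lt (R := ℝ)).1 (by push_cast; linarith [hxi.1])
  have hhi : m < c + 1 := (Int.cast_lt (R := ℝ)).1 (by push_cast; linarith [hxi.2])
  omega

section Exchange

variable {α : Type*} [DecidableEq α] {H B : Finset α} {i j : α}

def exchangeFamily (H : Finset α) : Set (Finset α) :=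
  {B | B = H ∨ ∃ i ∈ H, ∃ j ∉ H, B = insert j (H.erase i)}

theorem insert_erase_sdiff_self (hj : j ∉ H) : insert j (H.erase i) \ H = {j} := by
  ext t
  simp only [mem_sdiff, mem_insert, mem_erase, mem_singleton]
  grind

theorem sdiff_insert_erase_self (hi : i ∈ H) (hj : j ∉ H) : H \ insert j (H.erase i) = {i} := by
  ext t
  simp only [mem_sdiff, mem_insert, mem_erase, mem_singleton]
  grind

theorem card_eq_and_card_sdiff_le_one_iff : #B = #H ∧ #(B \ H) ≤ 1 ↔ B ∈ exchangeFamily H := by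
  constructor
  · rintro ⟨hcard, hle⟩
    rcases Nat.le_one_iff_eq_zero_or_eq_one.1 hle with h0 | h1
    · exact .inl (eq_of_subset_of_card_le (sdiff_eq_empty_iff_subset.1 (card_eq_zero.1 h0))
        hcard.ge)
    · obtain ⟨j, hj⟩ := card_eq_one.1 h1
      obtain ⟨i, hi⟩ := card_eq_one.1 ((card_sdiff_comm hcard).symm.trans h1)
      have hjB := Finset.ext_iff.1 hj
      have hiB := Finset.ext_iff.1 hi
      simp only [mem_sdiff, mem_singleton] at hjB hiB
      refine .inr ⟨i, ((hiB i).2 rfl).1, j, ((hjB j).2 rfl).2, ?_⟩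
      ext t
      simp only [mem_insert, mem_erase]
      grind
  · rintro (rfl | ⟨i, hi, j, hj, rfl⟩)
    · simp
    · rw [card_insert_of_notMem (fun h => hj (mem_of_mem_erase h)), card_erase_of_mem hi,
        insert_erase_sdiff_self hj, card_singleton]
      exact ⟨Nat.sub_add_cancel (card_pos.2 ⟨i, hi⟩), le_rfl⟩

theorem ncard_exchangeFamily [Fintype α] (H : Finset α) :
    (exchangeFamily H).ncard = #H * #Hᶜ + 1 := by
  set f : α × α → Finset α := fun p => insert p.2 (H.erase p.1)
  have hfamily : exchangeFamily H = ↑(insert H ((H ×ˢ Hᶜ).image f)) := by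
    ext B
    simp [exchangeFamily, f, eq_comm, and_assoc]
  have hinj : Set.InjOn f ↑(H ×ˢ Hᶜ) := by
    rintro ⟨i, j⟩ hp ⟨i', j'⟩ hq hf
    simp only [coe_product, Set.mem_prod, mem_coe, mem_compl] at hp hq
    have hj := insert_erase_sdiff_self (i := i) hp.2
    have hi := sdiff_insert_erase_self hp.1 hp.2
    simp only [f] at hf
    rw [hf] at hj hi
    rw [insert_erase_sdiff_self hq.2, singleton_inj] at hj
    rw [sdiff_insert_erase_self hq.1 hq.2, singleton_inj] at hi
    rw [hi, hj]
  have hH : H ∉ (H ×ˢ Hᶜ).image f := by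
    rintro hH
    obtain ⟨⟨i, j⟩, hp, hf⟩ := mem_image.1 hH
    simp only [mem_product, mem_compl] at hp
    simp only [f] at hf
    simpa [hf] using insert_erase_sdiff_self (i := i) hp.2
  rw [hfamily, Set.ncard_coe_finset, card_insert_of_notMem hH, card_image_of_injOn hinj,
    card_product]

end Exchange

section IndicatorVec

variable {ι : Type*} [DecidableEq ι]

def indicatorVec (B : Finset ι) : ι → ℝ := fun i => if i ∈ B then 1 else 0

theorem indicatorVec_injective : Function.Injective (indicatorVec : Finset ι → ι → ℝ) := by
  intro B B' h
  ext t
  have ht := congrFun h t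
  unfold indicatorVec at ht
  split_ifs at ht <;> simp_all

theorem sum_indicatorVec (S B : Finset ι) : ∑ i ∈ S, indicatorVec B i = #(S ∩ B) := by
  simp [indicatorVec]

end IndicatorVec

section CappedHypersimplex

variable {ι : Type*} [Fintype ι] {T : Finset ι} {k r : ℕ} {x : ι → ℝ}

/-- With `ι = Fin n`, `T = {k, …, n-1}` and `r = 1` this is the matroid polytope of `T_{k,n}`. -/
def cappedHypersimplex (T : Finset ι) (k r : ℕ) : Set (ι → ℝ) :=
  {x | (∀ i, x i ∈ Set.Icc 0 1) ∧ ∑ i, x i = k ∧ ∑ i ∈ T, x i ≤ r}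

theorem mem_extremePoints_cappedHypersimplex_of_forall_eq_zero_or_eq_one
    (hx : x ∈ cappedHypersimplex T k r) (h01 : ∀ i, x i = 0 ∨ x i = 1) :
    x ∈ (cappedHypersimplex T k r).extremePoints ℝ := by
  have hcube : cappedHypersimplex T k r ⊆ Set.univ.pi fun _ => Set.Icc 0 1 :=
    fun y hy i _ => hy.1 i
  refine inter_extremePoints_subset_extremePoints_of_subset hcube ⟨hx, ?_⟩
  rw [extremePoints_pi]
  intro i _
  rw [Set.extremePoints_Icc zero_le_one]
  exact h01 i

variable [DecidableEq ι]

theorem add_single_sub_single_mem_cappedHypersimplex (hx : x ∈ cappedHypersimplex T k r)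
    {i j : ι} (hij : i ≠ j) {c ε : ℝ} (hc : |c| ≤ ε) (hεi : ε ≤ min (x i) (1 - x i))
    (hεj : ε ≤ min (x j) (1 - x j)) (hεT : (i ∈ T ↔ j ∈ T) ∨ ε ≤ r - ∑ t ∈ T, x t) :
    x + (Pi.single i c - Pi.single j c) ∈ cappedHypersimplex T k r := by
  obtain ⟨hbox, hsum, htail⟩ := hx
  have hsum_add (S : Finset ι) : ∑ t ∈ S, (x + (Pi.single i c - Pi.single j c) : ι → ℝ) t =
      ∑ t ∈ S, x t + ((if i ∈ S then c else 0) - if j ∈ S then c else 0) := by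
    simp only [Pi.add_apply, Pi.sub_apply, sum_add_distrib, sum_sub_distrib, sum_pi_single']
  obtain ⟨hc_lo, hc_hi⟩ := abs_le.1 hc
  refine ⟨fun t => ?_, (hsum_add univ).trans ?_, (hsum_add T).trans_le ?_⟩
  · rcases eq_or_ne t i with rfl | hti
    · simp only [Pi.add_apply, Pi.sub_apply, Pi.single_eq_same, Pi.single_eq_of_ne hij,
        sub_zero, Set.mem_Icc]
      constructor <;> linarith [min_le_left (x t) (1 - x t), min_le_right (x t) (1 - x t)]
    rcases eq_or_ne t j with rfl | htj
    · simp only [Pi.add_apply, Pi.sub_apply, Pi.single_eq_same, Pi.single_eq_of_ne hti,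
        zero_sub, ← sub_eq_add_neg, Set.mem_Icc]
      constructor <;> linarith [min_le_left (x t) (1 - x t), min_le_right (x t) (1 - x t)]
    simpa [hti, htj] using hbox t
  · simp [hsum]
  · rcases hεT with hiff | hslack
    · simpa [hiff] using htail
    · split_ifs <;> linarith

theorem notMem_extremePoints_cappedHypersimplex (hx : x ∈ cappedHypersimplex T k r) {i j : ι}
    (hij : i ≠ j) (hxi : x i ∈ Set.Ioo 0 1) (hxj : x j ∈ Set.Ioo 0 1)
    (hT : (i ∈ T ↔ j ∈ T) ∨ ∑ t ∈ T, x t < r) :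
    x ∉ (cappedHypersimplex T k r).extremePoints ℝ := by
  obtain ⟨ε, hε, hεi, hεj, hεT⟩ : ∃ ε > 0, ε ≤ min (x i) (1 - x i) ∧ ε ≤ min (x j) (1 - x j) ∧
      ((i ∈ T ↔ j ∈ T) ∨ ε ≤ r - ∑ t ∈ T, x t) := by
    have hm : 0 < min (min (x i) (1 - x i)) (min (x j) (1 - x j)) := by
      simp only [lt_min_iff, sub_pos]
      exact ⟨hxi, hxj⟩
    rcases hT with hiff | hslack
    · exact ⟨_, hm, min_le_left _ _, min_le_right _ _, .inl hiff⟩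
    · exact ⟨_, lt_min hm (sub_pos.2 hslack), (min_le_left _ _).trans (min_le_left _ _),
        (min_le_left _ _).trans (min_le_right _ _), .inr (min_le_right _ _)⟩
  refine notMem_extremePoints_of_add_mem_of_sub_mem (d := Pi.single i ε - Pi.single j ε)
    (fun h => hε.ne' ?_) ?_ ?_
  · simpa [hij] using congrFun h i
  · exact add_single_sub_single_mem_cappedHypersimplex hx hij (abs_of_pos hε).le hεi hεj hεT
  · have hsub : x - (Pi.single i ε - Pi.single j ε) =
        x + (Pi.single i (-ε) - Pi.single j (-ε)) := by
      simp only [Pi.single_neg]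
      abel
    rw [hsub]
    exact add_single_sub_single_mem_cappedHypersimplex hx hij
      (by rw [abs_neg, abs_of_pos hε]) hεi hεj hεT

theorem eq_zero_or_eq_one_of_mem_extremePoints_cappedHypersimplex
    (hx : x ∈ (cappedHypersimplex T k r).extremePoints ℝ) (i : ι) : x i = 0 ∨ x i = 1 := by
  obtain ⟨hbox, hsum, htail⟩ := hx.1
  by_contra! hi
  have hxi : x i ∈ Set.Ioo 0 1 := ⟨(hbox i).1.lt_of_ne' hi.1, (hbox i).2.lt_of_ne hi.2⟩
  rcases htail.lt_or_eq with hlt | heq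
  · obtain ⟨j, -, hji, hxj⟩ := exists_ne_mem_Ioo_of_sum_eq_intCast (fun t _ => hbox t)
      (m := k) (by simpa using hsum) (mem_univ i) hxi
    exact notMem_extremePoints_cappedHypersimplex hx.1 hji.symm hxi hxj (.inr hlt) hx
  by_cases hiT : i ∈ T
  · obtain ⟨j, hjT, hji, hxj⟩ := exists_ne_mem_Ioo_of_sum_eq_intCast (fun t _ => hbox t)
      (m := r) (by simpa using heq) hiT hxi
    exact notMem_extremePoints_cappedHypersimplex hx.1 hji.symm hxi hxj
      (.inl (iff_of_true hiT hjT)) hx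
  · have hcompl : ∑ t ∈ Tᶜ, x t = ((k - r : ℤ) : ℝ) := by
      push_cast
      linarith [sum_compl_add_sum T x]
    obtain ⟨j, hjT, hji, hxj⟩ := exists_ne_mem_Ioo_of_sum_eq_intCast (fun t _ => hbox t)
      hcompl (mem_compl.2 hiT) hxi
    exact notMem_extremePoints_cappedHypersimplex hx.1 hji.symm hxi hxj
      (.inl (iff_of_false hiT (mem_compl.1 hjT))) hx

theorem indicatorVec_mem_cappedHypersimplex_iff {B : Finset ι} :
    indicatorVec B ∈ cappedHypersimplex T k r ↔ #B = k ∧ #(T ∩ B) ≤ r := by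
  have hbox (i : ι) : indicatorVec B i ∈ Set.Icc 0 1 := by
    unfold indicatorVec
    split_ifs <;> simp
  simp only [cappedHypersimplex, Set.mem_ofPred_eq, hbox, implies_true, true_and,
    sum_indicatorVec, univ_inter, Nat.cast_inj, Nat.cast_le]

theorem eq_indicatorVec_of_forall_eq_zero_or_eq_one (h01 : ∀ i, x i = 0 ∨ x i = 1) :
    x = indicatorVec {i | x i = 1} := by
  ext i
  rcases h01 i with h | h <;> simp [indicatorVec, h]

theorem extremePoints_cappedHypersimplex :
    (cappedHypersimplex T k r).extremePoints ℝ = indicatorVec '' {B | #B = k ∧ #(T ∩ B) ≤ r} := by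
  ext x
  constructor
  · intro hx
    have hx_eq := eq_indicatorVec_of_forall_eq_zero_or_eq_one
      (eq_zero_or_eq_one_of_mem_extremePoints_cappedHypersimplex hx)
    exact ⟨_, indicatorVec_mem_cappedHypersimplex_iff.1 (hx_eq ▸ hx.1), hx_eq.symm⟩
  · rintro ⟨B, hB, rfl⟩
    refine mem_extremePoints_cappedHypersimplex_of_forall_eq_zero_or_eq_one
      (indicatorVec_mem_cappedHypersimplex_iff.2 hB) fun i => ?_
    unfold indicatorVec
    split_ifs <;> simp

end CappedHypersimplex

theorem vertices_minimal_matroid_polytope_general (n k : ℕ) (hkn : k < n)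
    (P : Set (Fin n → ℝ))
    (hP : P = {x : Fin n → ℝ | (∀ i, 0 ≤ x i ∧ x i ≤ 1) ∧ (∑ i, x i = k) ∧
      ∑ i ∈ Finset.univ.filter (fun i : Fin n => k ≤ (i : ℕ)), x i ≤ 1})
    (V : Set (Fin n → ℝ))
    (hV : V = {y : Fin n → ℝ | ∃ B : Finset (Fin n),
      (B = Finset.univ.filter (fun i : Fin n => (i : ℕ) < k) ∨
        ∃ i j : Fin n, (i : ℕ) < k ∧ k ≤ (j : ℕ) ∧
          B = insert j ((Finset.univ.filter (fun i' : Fin n => (i' : ℕ) < k)).erase i)) ∧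
      y = fun i => if i ∈ B then (1 : ℝ) else 0}) :
    Set.extremePoints ℝ P = V ∧ V.ncard = k * (n - k) + 1 := by
  set H : Finset (Fin n) := univ.filter fun i => (i : ℕ) < k
  have hH : #H = k := by simp [H, Fin.card_filter_val_lt, hkn.le]
  have hP' : P = cappedHypersimplex Hᶜ k 1 := by
    rw [hP]
    ext x
    simp [cappedHypersimplex, H, compl_filter]
  have hV' : V = indicatorVec '' exchangeFamily H := by
    rw [hV]
    refine Set.ext fun y => exists_congr fun B => and_congr ?_ eq_comm
    simp [exchangeFamily, H]
  have hbases : {B | #B = k ∧ #(Hᶜ ∩ B) ≤ 1} = exchangeFamily H := by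
    ext B
    rw [← card_eq_and_card_sdiff_le_one_iff, hH, sdiff_eq_inter_compl, inter_comm]
    rfl
  rw [hP', hV', extremePoints_cappedHypersimplex, hbases,
    Set.ncard_image_of_injective _ indicatorVec_injective, ncard_exchangeFamily, card_compl, hH,
    Fintype.card_fin]
  exact ⟨rfl, rfl⟩

/-- The polytope `{x ∈ [0,1]^n : x₁+⋯+xₙ = k, x_{k+1}+⋯+xₙ ≤ 1}` (the matroid
polytope of the minimal matroid `T_{k,n}`, coordinates indexed from 0) has exactly
`k*(n-k)+1` vertices: the indicator vectors of the set `{0,…,k-1}` and of the sets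
`({0,…,k-1} \ {i}) ∪ {j}` for `i < k ≤ j`. -/
theorem vertices_minimal_matroid_polytope (n k : ℕ) (hk : 0 < k) (hkn : k < n)
    (P : Set (Fin n → ℝ))
    (hP : P = {x : Fin n → ℝ | (∀ i, 0 ≤ x i ∧ x i ≤ 1) ∧ (∑ i, x i = k) ∧
      ∑ i ∈ Finset.univ.filter (fun i : Fin n => k ≤ (i : ℕ)), x i ≤ 1})
    (V : Set (Fin n → ℝ))
    (hV : V = {y : Fin n → ℝ | ∃ B : Finset (Fin n),
      (B = Finset.univ.filter (fun i : Fin n => (i : ℕ) < k) ∨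
        ∃ i j : Fin n, (i : ℕ) < k ∧ k ≤ (j : ℕ) ∧
          B = insert j ((Finset.univ.filter (fun i' : Fin n => (i' : ℕ) < k)).erase i)) ∧
      y = fun i => if i ∈ B then (1 : ℝ) else 0}) :
    Set.extremePoints ℝ P = V ∧ V.ncard = k * (n - k) + 1 :=
  vertices_minimal_matroid_polytope_general n k hkn P hP V hV
end

section
/- Let r and s be nonnegative integers. Then the polynomial Q(x) = sum over j from 0 to min(r,s) of j! * C(r, j) * C(s, j) * x^j has only real roots. -/
open Polynomial

/-- A nonzero real polynomial with at least `natDegree - 1` roots splits. -/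
lemma aux_splits_of_natDegree_le_card_roots_succ {q : ℝ[X]} (hq : q ≠ 0)
    (h : q.natDegree ≤ Multiset.card q.roots + 1) : q.Splits := by
  obtain ⟨g, hg⟩ := q.prod_multiset_X_sub_C_dvd
  have hprod : ((q.roots.map fun a => X - C a).prod : ℝ[X]) ≠ 0 :=
    (monic_multiset_prod_of_monic _ _ fun a _ => monic_X_sub_C a).ne_zero
  have hg0 : g ≠ 0 := fun h0 => hq (by simpa [h0] using hg)
  have hdeg : q.natDegree = Multiset.card q.roots + g.natDegree := by
    conv_lhs => rw [hg]
    rw [natDegree_mul hprod hg0, natDegree_multiset_prod_X_sub_C_eq_card]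
  have hgdeg : g.natDegree ≤ 1 := by omega
  rw [hg]
  refine Splits.mul ?_ (Splits.of_natDegree_le_one hgdeg)
  rw [splits_iff_card_roots, roots_multiset_prod_X_sub_C,
    natDegree_multiset_prod_X_sub_C_eq_card]

lemma aux_rootMultiplicity_add_derivative {p : ℝ[X]} (x : ℝ)
    (hq : p + derivative p ≠ 0) :
    p.rootMultiplicity x - 1 ≤ (p + derivative p).rootMultiplicity x := by
  rw [le_rootMultiplicity_iff hq]
  have h1 : (X - C x) ^ (p.rootMultiplicity x - 1) ∣ p :=
    dvd_trans (pow_dvd_pow _ (Nat.sub_le _ _)) (p.pow_rootMultiplicity_dvd x)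
  have h2 : (X - C x) ^ (p.rootMultiplicity x - 1) ∣ derivative p :=
    dvd_trans (pow_dvd_pow _ (p.rootMultiplicity_sub_one_le_derivative_rootMultiplicity x))
      ((derivative p).pow_rootMultiplicity_dvd x)
  exact dvd_add h1 h2

/-- Rolle-type argument: if a real polynomial splits, then so does `p + p'`. -/
lemma aux_splits_add_derivative {p : ℝ[X]} (hp : p ≠ 0)
    (hsp : p.Splits) : (p + derivative p).Splits := by
  classical
  set q := p + derivative p with hqdef
  rcases Nat.eq_zero_or_pos p.natDegree with h0 | hpos
  · have hd : derivative p = 0 := by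
      rw [eq_C_of_natDegree_eq_zero h0, derivative_C]
    rw [hqdef, hd, add_zero]
    exact hsp
  set n := p.natDegree with hn
  -- q has the same degree and leading coefficient as p
  have hcoeff : q.coeff n = p.coeff n := by
    have hd : (derivative p).coeff n = 0 :=
      coeff_eq_zero_of_natDegree_lt (lt_of_le_of_lt (natDegree_derivative_le p) (by omega))
    simp [hqdef, hd]
  have hq0 : q ≠ 0 := by
    intro h
    rw [h, coeff_zero] at hcoeff
    exact (leadingCoeff_ne_zero.mpr hp) hcoeff.symm
  have hqn : q.natDegree = n := by
    have h1 : q.natDegree ≤ n :=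
      (natDegree_add_le _ _).trans (max_le le_rfl
        ((natDegree_derivative_le p).trans (Nat.sub_le _ _)))
    have h2 : n ≤ q.natDegree := le_natDegree_of_ne_zero (by
      rw [hcoeff]; exact leadingCoeff_ne_zero.mpr hp)
    omega
  set t : Finset ℝ := p.roots.toFinset with ht
  -- Rolle: between consecutive roots of p there is a root of q
  have hinter : t.card ≤ (q.roots.toFinset \ t).card + 1 := by
    refine Finset.card_le_diff_of_interleaved fun x hx y hy hxy _ => ?_
    rw [ht, Multiset.mem_toFinset, mem_roots hp] at hx hy
    have hcont : ContinuousOn (fun u : ℝ => Real.exp u * p.eval u) (Set.Icc x y) :=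
      (Real.continuous_exp.mul p.continuous).continuousOn
    have hx' : p.eval x = 0 := hx
    have hy' : p.eval y = 0 := hy
    obtain ⟨z, hz1, hz2⟩ := exists_deriv_eq_zero hxy hcont (by simp [hx', hy'])
    have hder : HasDerivAt (fun u : ℝ => Real.exp u * p.eval u)
        (Real.exp z * p.eval z + Real.exp z * ((derivative p).eval z)) z :=
      (Real.hasDerivAt_exp z).mul (p.hasDerivAt z)
    have hzero : Real.exp z * p.eval z + Real.exp z * ((derivative p).eval z) = 0 := by
      rw [← hder.deriv]; exact hz2
    have hfac : Real.exp z * (p.eval z + (derivative p).eval z) = 0 := by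
      rw [mul_add]; exact hzero
    have hqz : q.eval z = 0 := by
      rcases mul_eq_zero.mp hfac with h | h
      · exact absurd h (Real.exp_ne_zero z)
      · simpa [hqdef] using h
    refine ⟨z, ?_, hz1.1, hz1.2⟩
    rw [Multiset.mem_toFinset, mem_roots hq0]
    exact hqz
  -- counting roots with multiplicity
  have hcardp : Multiset.card p.roots = n := splits_iff_card_roots.mp hsp
  have key : n ≤ Multiset.card q.roots + 1 := by
    set S : Finset ℝ := q.roots.toFinset \ t with hS
    have hsum_le : ∑ x ∈ t ∪ S, q.roots.count x ≤ Multiset.card q.roots := by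
      calc ∑ x ∈ t ∪ S, q.roots.count x
          = ∑ x ∈ (t ∪ S) ∩ q.roots.toFinset, q.roots.count x := by
            refine (Finset.sum_subset Finset.inter_subset_left fun x hxA hx => ?_).symm
            rw [Multiset.count_eq_zero]
            intro hmem
            exact hx (Finset.mem_inter.mpr ⟨hxA, Multiset.mem_toFinset.mpr hmem⟩)
        _ ≤ ∑ x ∈ q.roots.toFinset, q.roots.count x :=
            Finset.sum_le_sum_of_subset Finset.inter_subset_right
        _ = Multiset.card q.roots := Multiset.toFinset_sum_count_eq _
    have hsum_union : ∑ x ∈ t ∪ S, q.roots.count x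
        = ∑ x ∈ t, q.roots.count x + ∑ x ∈ S, q.roots.count x :=
      Finset.sum_union Finset.disjoint_sdiff
    -- lower bound on the t part
    have h_t : n ≤ ∑ x ∈ t, q.roots.count x + t.card := by
      have hnt : n = ∑ x ∈ t, p.roots.count x := by
        rw [← hcardp, ht, Multiset.toFinset_sum_count_eq]
      have hle : ∑ x ∈ t, p.roots.count x ≤ ∑ x ∈ t, (q.roots.count x + 1) := by
        refine Finset.sum_le_sum fun x _ => ?_
        have h1 := aux_rootMultiplicity_add_derivative (p := p) x hq0
        rw [count_roots, count_roots, hqdef]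
        omega
      rw [hnt]
      calc ∑ x ∈ t, p.roots.count x ≤ ∑ x ∈ t, (q.roots.count x + 1) := hle
        _ = ∑ x ∈ t, q.roots.count x + t.card := by
            rw [Finset.sum_add_distrib, Finset.card_eq_sum_ones]
    -- lower bound on the S part
    have h_S : S.card ≤ ∑ x ∈ S, q.roots.count x := by
      calc S.card = ∑ _x ∈ S, 1 := Finset.card_eq_sum_ones _
        _ ≤ ∑ x ∈ S, q.roots.count x := by
            refine Finset.sum_le_sum fun x hx => ?_
            rw [Nat.one_le_iff_ne_zero, ← Nat.pos_iff_ne_zero, Multiset.count_pos]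
            exact Multiset.mem_toFinset.mp (Finset.mem_sdiff.mp hx).1
    calc n ≤ ∑ x ∈ t, q.roots.count x + t.card := h_t
      _ ≤ ∑ x ∈ t, q.roots.count x + (S.card + 1) := Nat.add_le_add_left hinter _
      _ = (∑ x ∈ t, q.roots.count x + S.card) + 1 := by omega
      _ ≤ (∑ x ∈ t, q.roots.count x + ∑ x ∈ S, q.roots.count x) + 1 :=
          Nat.add_le_add_right (Nat.add_le_add_left h_S _) 1
      _ = (∑ x ∈ t ∪ S, q.roots.count x) + 1 := by rw [hsum_union]
      _ ≤ Multiset.card q.roots + 1 := Nat.add_le_add_right hsum_le 1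
  exact aux_splits_of_natDegree_le_card_roots_succ hq0 (by omega)

/-- If a real polynomial splits, so does its reverse. -/
lemma aux_splits_reverse {p : ℝ[X]} (hsp : p.Splits) :
    p.reverse.Splits := by
  rcases eq_or_ne p 0 with rfl | hp
  · rw [reverse_zero]; exact Splits.zero
  have key : ∀ s : Multiset ℝ,
      ((s.map fun a => X - C a).prod : ℝ[X]).reverse.Splits := by
    intro s
    induction s using Multiset.induction with
    | empty =>
      simp only [Multiset.map_zero, Multiset.prod_zero, ← C_1, reverse_C]
      exact Splits.C _
    | cons a s ih =>
      rw [Multiset.map_cons, Multiset.prod_cons, reverse_mul_of_domain]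
      refine Splits.mul (Splits.of_natDegree_le_one ?_) ih
      exact le_trans (reverse_natDegree_le _) (natDegree_X_sub_C a).le
  have hfac := hsp.eq_prod_roots
  rw [hfac, reverse_mul_of_domain, reverse_C]
  exact Splits.mul (Splits.C _) (key _)

/-- Iterating `p ↦ p + p'`, starting from `X ^ s`. -/
noncomputable def auxG (s : ℕ) : ℕ → ℝ[X]
  | 0 => X ^ s
  | r + 1 => auxG s r + derivative (auxG s r)

lemma auxG_coeff_natDegree (s r : ℕ) : (auxG s r).coeff s = 1 ∧ (auxG s r).natDegree ≤ s := by
  induction r with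
  | zero => simp [auxG, coeff_X_pow, natDegree_X_pow]
  | succ r ih =>
    obtain ⟨h1, h2⟩ := ih
    constructor
    · have hd : (derivative (auxG s r)).coeff s = 0 := by
        rw [coeff_derivative, coeff_eq_zero_of_natDegree_lt (by omega), zero_mul]
      show (auxG s r + derivative (auxG s r)).coeff s = 1
      rw [coeff_add, hd, add_zero, h1]
    · show (auxG s r + derivative (auxG s r)).natDegree ≤ s
      exact (natDegree_add_le _ _).trans (max_le h2
        ((natDegree_derivative_le _).trans ((Nat.sub_le _ _).trans h2)))

lemma auxG_ne_zero (s r : ℕ) : auxG s r ≠ 0 := by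
  intro h0
  have h1 := (auxG_coeff_natDegree s r).1
  rw [h0, coeff_zero] at h1
  exact one_ne_zero h1.symm

lemma auxG_natDegree (s r : ℕ) : (auxG s r).natDegree = s := by
  obtain ⟨h1, h2⟩ := auxG_coeff_natDegree s r
  exact le_antisymm h2 (le_natDegree_of_ne_zero (by rw [h1]; exact one_ne_zero))

lemma auxG_splits (s r : ℕ) : (auxG s r).Splits := by
  induction r with
  | zero => exact Splits.pow Splits.X _
  | succ r ih => exact aux_splits_add_derivative (auxG_ne_zero s r) ih

/-- The key combinatorial recurrence. -/
lemma aux_choose_identity (r s j : ℕ) :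
    (((j + 1).factorial * (r + 1).choose (j + 1) * s.choose (j + 1) : ℕ) : ℝ) =
      (((j + 1).factorial * r.choose (j + 1) * s.choose (j + 1) : ℕ) : ℝ) +
        ((j.factorial * r.choose j * s.choose j : ℕ) : ℝ) * ((s - j : ℕ) : ℝ) := by
  have h1 : (s.choose (j + 1) * (j + 1) : ℕ) = s.choose j * (s - j) :=
    Nat.choose_succ_right_eq s j
  have h2 : (r + 1).choose (j + 1) = r.choose j + r.choose (j + 1) := Nat.choose_succ_succ r j
  have key2 : (j + 1).factorial * r.choose j * s.choose (j + 1) =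
      j.factorial * r.choose j * s.choose j * (s - j) := by
    calc (j + 1).factorial * r.choose j * s.choose (j + 1)
        = j.factorial * r.choose j * (s.choose (j + 1) * (j + 1)) := by
          rw [Nat.factorial_succ]; ring
      _ = j.factorial * r.choose j * (s.choose j * (s - j)) := by rw [h1]
      _ = j.factorial * r.choose j * s.choose j * (s - j) := by ring
  have main : (j + 1).factorial * (r + 1).choose (j + 1) * s.choose (j + 1) =
      (j + 1).factorial * r.choose (j + 1) * s.choose (j + 1) +
        j.factorial * r.choose j * s.choose j * (s - j) := by
    rw [h2, Nat.mul_add, Nat.add_mul, key2]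
    ring
  exact_mod_cast congrArg (Nat.cast (R := ℝ)) main

/-- Explicit formula for `auxG`. -/
lemma auxG_eq (s r : ℕ) :
    auxG s r = ∑ j ∈ Finset.range (s + 1),
      C ((j.factorial * r.choose j * s.choose j : ℕ) : ℝ) * X ^ (s - j) := by
  induction r with
  | zero =>
    rw [Finset.sum_eq_single_of_mem 0 (Finset.mem_range.mpr (by omega))]
    · simp [auxG]
    · intro j _ hj
      obtain ⟨i, rfl⟩ := Nat.exists_eq_succ_of_ne_zero hj
      simp [Nat.choose_eq_zero_of_lt (Nat.succ_pos i)]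
  | succ r ih =>
    show auxG s r + derivative (auxG s r) = _
    rw [ih, derivative_sum]
    simp only [derivative_C_mul_X_pow]
    rw [Finset.sum_range_succ (fun j => C (((j.factorial * r.choose j * s.choose j : ℕ) : ℝ)
      * ((s - j : ℕ) : ℝ)) * X ^ (s - j - 1)), Nat.sub_self, Nat.cast_zero, mul_zero, map_zero,
      zero_mul, add_zero]
    rw [Finset.sum_range_succ' (fun j => C (((j.factorial * r.choose j * s.choose j : ℕ) : ℝ))
      * X ^ (s - j)),
      Finset.sum_range_succ' (fun j => C (((j.factorial * (r + 1).choose j * s.choose j : ℕ) : ℝ))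
      * X ^ (s - j))]
    rw [add_right_comm, ← Finset.sum_add_distrib]
    congr 1
    · refine Finset.sum_congr rfl fun j hj => ?_
      rw [show s - (j + 1) = s - j - 1 from (Nat.sub_sub s j 1).symm ▸ rfl, ← add_mul, ← C_add,
        ← aux_choose_identity r s j]
    · simp

/-- The polynomial ∑ⱼ j! C(r,j) C(s,j) xʲ has only real roots. -/
theorem schur_step_real_rooted (r s : ℕ) :
    Polynomial.Splits (Polynomial.map (RingHom.id ℝ)
      (∑ j ∈ Finset.range (min r s + 1),
        Polynomial.C ((j.factorial * r.choose j * s.choose j : ℕ) : ℝ) *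
          Polynomial.X ^ j)) := by
  rw [Polynomial.map_id]
  have hrev : (auxG s r).reverse = ∑ j ∈ Finset.range (s + 1),
      C ((j.factorial * r.choose j * s.choose j : ℕ) : ℝ) * X ^ j := by
    show reflect (auxG s r).natDegree (auxG s r) = _
    rw [auxG_natDegree, auxG_eq]
    have hrefl : ∀ (T : Finset ℕ) (f : ℕ → ℝ[X]),
        reflect s (∑ j ∈ T, f j) = ∑ j ∈ T, reflect s (f j) := by
      intro T f
      induction T using Finset.cons_induction with
      | empty => simp [reflect_zero]
      | cons a T ha ih => rw [Finset.sum_cons, Finset.sum_cons, reflect_add, ih]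
    rw [hrefl]
    refine Finset.sum_congr rfl fun j hj => ?_
    rw [Finset.mem_range] at hj
    rw [reflect_C_mul_X_pow, revAt_le (Nat.sub_le _ _), Nat.sub_sub_self (by omega)]
  have hsum : (∑ j ∈ Finset.range (min r s + 1),
      C ((j.factorial * r.choose j * s.choose j : ℕ) : ℝ) * X ^ j)
      = ∑ j ∈ Finset.range (s + 1),
      C ((j.factorial * r.choose j * s.choose j : ℕ) : ℝ) * X ^ j := by
    refine Finset.sum_subset (Finset.range_subset_range.mpr (by omega)) fun j hj hj' => ?_
    rw [Finset.mem_range] at hj hj'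
    have hrj : r < j := by omega
    simp [Nat.choose_eq_zero_of_lt hrj]
  rw [hsum, ← hrev]
  exact aux_splits_reverse (auxG_splits s r)
end

section
/- Let 1 ≤ k ≤ n-1. In the formal power series ring Q[[x]], the identity (sum over t ≥ 0 of D(t) x^t) = (sum over j from 0 to k-1 of C(k-1, j) * C(n-k-1, j) * x^j) / (1-x)^n holds, where D(t) = sum over j from 0 to t of C(n-k-1+j, j) * C(k-1+j, j). -/
/-!
Write `k = b + 1` and `n = a + b + 2`. Since `D` is the sequence of partial sums of
`t ↦ C(a+t, t) C(b+t, t)`, it suffices that this sequence has generating function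
`(∑ C(a,j) C(b,j) x^j) / (1-x)^(a+b+1)`, i.e. that
`∑_{i+m=t} C(a,i) C(b,i) C(a+b+m, a+b) = C(a+t, t) C(b+t, t)`.
Both sides satisfy `(t+1)² u(t+1) = (a+t+1)(b+t+1) u(t)` and start at `1`. For the right side
this is Pascal-type absorption; for the left side split `(i+m)² = m(2i+m) + i²`, shift `m` in the
first part and `i` in the second, and compare term by term.
-/

open PowerSeries Finset

theorem choose_mul_choose_mul_choose_recurrence (a b j m : ℕ) :
    (a + j + m + 1) * (b + j + m + 1) *
        (a.choose j * b.choose j * (a + b + m).choose (a + b)) =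
      (m + 1) * (2 * j + m + 1) *
          (a.choose j * b.choose j * (a + b + m + 1).choose (a + b)) +
        (j + 1) ^ 2 * (a.choose (j + 1) * b.choose (j + 1) * (a + b + m).choose (a + b)) := by
  rcases lt_or_ge a j with hja | hja
  · simp [Nat.choose_eq_zero_of_lt hja, Nat.choose_eq_zero_of_lt (hja.trans (lt_add_one j))]
  rcases lt_or_ge b j with hjb | hjb
  · simp [Nat.choose_eq_zero_of_lt hjb, Nat.choose_eq_zero_of_lt (hjb.trans (lt_add_one j))]
  have ha := Nat.choose_succ_right_eq a j
  have hb := Nat.choose_succ_right_eq b j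
  have hm := Nat.choose_mul_succ_eq (a + b + m) (a + b)
  rw [show a + b + m + 1 - (a + b) = m + 1 by omega] at hm
  zify [hja, hjb] at *
  -- with `c = 2j+m+1`: `(a-j+c)(b-j+c) = c(a+b+m+1) + (a-j)(b-j)`
  linear_combination (2 * j + m + 1 : ℤ) * (a.choose j) * (b.choose j) * hm
    - ((a + b + m).choose (a + b) * (j + 1) * (a.choose (j + 1) : ℤ)) * hb
    - ((a + b + m).choose (a + b) * (b - j) * (b.choose j : ℤ)) * ha

theorem sq_succ_mul_sum_antidiagonal_succ (a b t : ℕ) :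
    (t + 1) ^ 2 * ∑ p ∈ antidiagonal (t + 1),
        a.choose p.1 * b.choose p.1 * (a + b + p.2).choose (a + b) =
      (a + t + 1) * (b + t + 1) * ∑ p ∈ antidiagonal t,
        a.choose p.1 * b.choose p.1 * (a + b + p.2).choose (a + b) := by
  set f : ℕ × ℕ → ℕ := fun p ↦ a.choose p.1 * b.choose p.1 * (a + b + p.2).choose (a + b)
  calc (t + 1) ^ 2 * ∑ p ∈ antidiagonal (t + 1), f p
      = ∑ p ∈ antidiagonal (t + 1), p.2 * (2 * p.1 + p.2) * f p +
          ∑ p ∈ antidiagonal (t + 1), p.1 ^ 2 * f p := by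
        rw [mul_sum, ← sum_add_distrib]
        refine sum_congr rfl fun p hp ↦ ?_
        rw [← mem_antidiagonal.mp hp]
        ring
    _ = ∑ p ∈ antidiagonal t, (p.2 + 1) * (2 * p.1 + (p.2 + 1)) * f (p.1, p.2 + 1) +
          ∑ p ∈ antidiagonal t, (p.1 + 1) ^ 2 * f (p.1 + 1, p.2) := by
        rw [Nat.sum_antidiagonal_succ', Nat.sum_antidiagonal_succ]
        simp only [zero_mul, zero_add, zero_pow two_ne_zero]
    _ = ∑ p ∈ antidiagonal t, (a + p.1 + p.2 + 1) * (b + p.1 + p.2 + 1) * f p := by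
        rw [← sum_add_distrib]
        exact sum_congr rfl fun p _ ↦ (choose_mul_choose_mul_choose_recurrence a b p.1 p.2).symm
    _ = (a + t + 1) * (b + t + 1) * ∑ p ∈ antidiagonal t, f p := by
        rw [mul_sum]
        refine sum_congr rfl fun p hp ↦ ?_
        rw [← mem_antidiagonal.mp hp]
        ring

theorem sum_antidiagonal_choose_mul_choose_mul_choose (a b t : ℕ) :
    ∑ p ∈ antidiagonal t, a.choose p.1 * b.choose p.1 * (a + b + p.2).choose (a + b) =
      (a + t).choose t * (b + t).choose t := by
  induction t with
  | zero => simp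
  | succ t ih =>
    refine Nat.eq_of_mul_eq_mul_left (pow_pos t.succ_pos 2) ?_
    rw [sq_succ_mul_sum_antidiagonal_succ, ih, ← add_assoc, ← add_assoc]
    calc (a + t + 1) * (b + t + 1) * ((a + t).choose t * (b + t).choose t)
        = ((a + t + 1) * (a + t).choose t) * ((b + t + 1) * (b + t).choose t) := by ring
      _ = (t + 1) ^ 2 * ((a + t + 1).choose (t + 1) * (b + t + 1).choose (t + 1)) := by
        rw [Nat.add_one_mul_choose_eq, Nat.add_one_mul_choose_eq]
        ring

theorem PowerSeries.mk_sum_range_succ {R : Type*} [CommSemiring R] (f : ℕ → R) :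
    (mk fun t ↦ ∑ j ∈ range (t + 1), f j) = mk f * mk 1 := by
  ext t
  rw [coeff_mul, Nat.sum_antidiagonal_eq_sum_range_succ_mk]
  simp

theorem PowerSeries.sum_range_smul_X_pow {R : Type*} [Semiring R] {f : ℕ → R} {N : ℕ}
    (hf : ∀ j, N ≤ j → f j = 0) : ∑ j ∈ range N, f j • (X : R⟦X⟧) ^ j = mk f := by
  ext i
  simp only [map_sum, coeff_smul, coeff_X_pow, smul_eq_mul, mul_ite, mul_one, mul_zero,
    sum_ite_eq, mem_range, coeff_mk]
  split_ifs with hi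
  · rfl
  · exact (hf i (not_lt.mp hi)).symm

theorem PowerSeries.mk_choose_add_mul_choose_add {R : Type*} [CommSemiring R] (a b : ℕ) :
    (mk fun t ↦ ((a + t).choose t * (b + t).choose t : R)) =
      (mk fun j ↦ (a.choose j * b.choose j : R)) *
        mk fun m ↦ ((a + b + m).choose (a + b) : R) := by
  ext t
  rw [coeff_mul]
  simp only [coeff_mk]
  have h := congrArg (Nat.cast : ℕ → R) (sum_antidiagonal_choose_mul_choose_mul_choose a b t)
  push_cast at h
  exact h.symm

theorem PowerSeries.mk_choose_add_mul_choose_add_mul_one_sub_pow {R : Type*} [CommRing R]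
    (a b : ℕ) :
    (mk fun t ↦ ((a + t).choose t * (b + t).choose t : R)) * (1 - X) ^ (a + b + 1) =
      mk fun j ↦ (a.choose j * b.choose j : R) := by
  rw [mk_choose_add_mul_choose_add, mul_assoc, mk_add_choose_mul_one_sub_pow_eq_one, mul_one]

/-- The generating function of the Ehrhart polynomial of the minimal matroid T_{k,n}
equals the h*-polynomial divided by (1-x)^n, in ℚ⟦x⟧. -/
theorem hstar_generating_function (n k : ℕ) (hk : 1 ≤ k) (hkn : k ≤ n - 1) :
    (PowerSeries.mk fun t : ℕ =>
        (∑ j ∈ Finset.range (t + 1),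
          ((n - k - 1 + j).choose j * (k - 1 + j).choose j : ℚ))) =
      (∑ j ∈ Finset.range k,
          ((k - 1).choose j * (n - k - 1).choose j : ℚ) • (PowerSeries.X : ℚ⟦X⟧) ^ j) *
        ((1 - (PowerSeries.X : ℚ⟦X⟧)) ^ n)⁻¹ := by
  obtain ⟨b, rfl⟩ : ∃ b, k = b + 1 := ⟨k - 1, by omega⟩
  obtain ⟨a, rfl⟩ : ∃ a, n = a + b + 1 + 1 := ⟨n - b - 2, by omega⟩
  have hvanish : ∀ j, b + 1 ≤ j → (b.choose j * a.choose j : ℚ) = 0 := fun j hj ↦ by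
    simp [Nat.choose_eq_zero_of_lt (Nat.lt_of_succ_le hj)]
  simp only [show a + b + 1 + 1 - (b + 1) - 1 = a by omega, Nat.add_sub_cancel]
  rw [eq_mul_inv_iff_mul_eq (by simp), sum_range_smul_X_pow hvanish, mk_sum_range_succ, pow_succ,
    mul_mul_mul_comm, mk_choose_add_mul_choose_add_mul_one_sub_pow, mk_one_mul_one_sub_eq_one,
    mul_one]
  simp only [mul_comm]
end

section
/- Let 1 ≤ k ≤ n-1 and m ≥ 0, and denote by [t^m] P(t) the coefficient of t^m in a polynomial P. Then the coefficient of t^m in the polynomial D(t) = (1/C(n-1,k-1)) * C(t+n-k, n-k) * (sum over j from 0 to k-1 of C(n-k-1+j, j) * C(t+j, j)) equals (1/(n-1)!) * sum over j from 0 to k-1, sum over l from 0 to j, of ((k-1)!/j!) * C(n-k-1+j, j) * s(j+1, l+1) * s(n-k+1, m-l+1), where s(a, b) denotes the unsigned Stirling number of the first kind. -/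
open Polynomial

/-- The unsigned Stirling number of the first kind `s(a, b)` (with integer lower index,
vanishing for negative `b`), defined via `t(t+1)⋯(t+a-1) = ∑_b s(a,b) t^b`. -/
noncomputable def stirlingFirst (a : ℕ) (b : ℤ) : ℕ :=
  if 0 ≤ b then (ascPochhammer ℕ a).coeff b.toNat else 0

lemma binomPoly_coeff (a i : ℕ) :
    (binomPoly a).coeff i = ((ascPochhammer ℕ (a + 1)).coeff (i + 1) : ℚ) / (a.factorial : ℚ) := by
  have h2 : ((ascPochhammer ℚ a).comp (X + 1)).coeff i
      = (ascPochhammer ℚ (a + 1)).coeff (i + 1) := by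
    rw [ascPochhammer_succ_left, coeff_X_mul]
  have h3 : (ascPochhammer ℚ (a + 1)).coeff (i + 1)
      = ((ascPochhammer ℕ (a + 1)).coeff (i + 1) : ℚ) := by
    rw [← ascPochhammer_map (Nat.castRingHom ℚ) (a + 1), coeff_map]
    simp
  rw [binomPoly, coeff_smul, h2, h3, smul_eq_mul, inv_mul_eq_div]

lemma stirlingFirst_nat (a b : ℕ) : stirlingFirst a (b : ℤ) = (ascPochhammer ℕ a).coeff b := by
  simp [stirlingFirst]

lemma stirlingFirst_zero_of_big (a : ℕ) (b : ℤ) (ha : 1 ≤ a) (hb : b ≤ 0) :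
    stirlingFirst a b = 0 := by
  rcases lt_or_eq_of_le hb with h | h
  · simp [stirlingFirst, not_le.mpr h]
  · subst h
    simp only [stirlingFirst, le_refl, if_pos, Int.toNat_zero]
    rw [Polynomial.coeff_zero_eq_eval_zero, ascPochhammer_eval_zero]
    rw [if_neg (by omega)]

lemma stirlingFirst_zero_of_deg (a : ℕ) (b : ℕ) (hb : a < b) :
    stirlingFirst a (b : ℤ) = 0 := by
  rw [stirlingFirst_nat]
  apply Polynomial.coeff_eq_zero_of_natDegree_lt
  rw [ascPochhammer_natDegree]
  exact hb

/-- Formula for the coefficients of the Ehrhart polynomial of the minimal matroid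
in terms of unsigned Stirling numbers of the first kind. -/
theorem minD_coeff_formula (n k m : ℕ) (hk : 1 ≤ k) (hkn : k ≤ n - 1) :
    (minD n k).coeff m =
      ((n - 1).factorial : ℚ)⁻¹ *
        ∑ j ∈ Finset.range k, ∑ l ∈ Finset.range (j + 1),
          ((k - 1).factorial : ℚ) / (j.factorial : ℚ) *
            ((n - k - 1 + j).choose j : ℚ) *
            (stirlingFirst (j + 1) ((l : ℤ) + 1) : ℚ) *
            (stirlingFirst (n - k + 1) ((m : ℤ) - (l : ℤ) + 1) : ℚ) := by
  have hn : k + 1 ≤ n := by omega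
  rw [minD, coeff_smul, Finset.mul_sum, finset_sum_coeff, smul_eq_mul, Finset.mul_sum,
    Finset.mul_sum]
  apply Finset.sum_congr rfl
  intro j hj
  -- define F
  set F : ℕ → ℚ := fun l => (stirlingFirst (j + 1) ((l : ℤ) + 1) : ℚ) *
      (stirlingFirst (n - k + 1) ((m : ℤ) - (l : ℤ) + 1) : ℚ) with hF
  have key : (binomPoly (n - k) * (((n - k - 1 + j).choose j : ℚ) • binomPoly j)).coeff m
      = ((n - k - 1 + j).choose j : ℚ) *
        ((j.factorial * (n - k).factorial : ℚ)⁻¹ * ∑ l ∈ Finset.range (m + 1), F l) := by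
    rw [mul_smul_comm, coeff_smul, smul_eq_mul]
    congr 1
    rw [mul_comm (binomPoly (n - k)), coeff_mul, Finset.Nat.sum_antidiagonal_eq_sum_range_succ_mk,
      Finset.mul_sum]
    apply Finset.sum_congr rfl
    intro l hl
    have hlm : l ≤ m := by simp at hl; omega
    have e1 : (stirlingFirst (j + 1) ((l : ℤ) + 1) : ℚ)
        = ((ascPochhammer ℕ (j + 1)).coeff (l + 1) : ℚ) := by
      rw [show ((l : ℤ) + 1) = ((l + 1 : ℕ) : ℤ) by push_cast; ring, stirlingFirst_nat]
    have e2 : (stirlingFirst (n - k + 1) ((m : ℤ) - (l : ℤ) + 1) : ℚ)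
        = ((ascPochhammer ℕ (n - k + 1)).coeff (m - l + 1) : ℚ) := by
      rw [show ((m : ℤ) - (l : ℤ) + 1) = ((m - l + 1 : ℕ) : ℤ) by
        push_cast [Nat.cast_sub hlm]; ring, stirlingFirst_nat]
    simp only [hF]
    rw [binomPoly_coeff, binomPoly_coeff, e1, e2]
    have hj0 : (j.factorial : ℚ) ≠ 0 := Nat.cast_ne_zero.mpr (Nat.factorial_ne_zero j)
    have hnk0 : ((n - k).factorial : ℚ) ≠ 0 := Nat.cast_ne_zero.mpr (Nat.factorial_ne_zero _)
    field_simp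
  rw [key]
  -- truncate the sum
  have hsum : ∑ l ∈ Finset.range (m + 1), F l = ∑ l ∈ Finset.range (j + 1), F l := by
    have h1 : ∑ l ∈ Finset.range (m + 1), F l = ∑ l ∈ Finset.range (m + j + 2), F l := by
      apply Finset.sum_subset
      · intro x hx; simp at hx ⊢; omega
      · intro l _ hl
        simp only [Finset.mem_range, not_lt] at hl
        have : stirlingFirst (n - k + 1) ((m : ℤ) - (l : ℤ) + 1) = 0 := by
          apply stirlingFirst_zero_of_big _ _ (by omega)
          omega
        simp [hF, this]
    have h2 : ∑ l ∈ Finset.range (j + 1), F l = ∑ l ∈ Finset.range (m + j + 2), F l := by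
      apply Finset.sum_subset
      · intro x hx; simp at hx ⊢; omega
      · intro l _ hl
        simp only [Finset.mem_range, not_lt] at hl
        have : stirlingFirst (j + 1) ((l : ℤ) + 1) = 0 := by
          rw [show ((l : ℤ) + 1) = ((l + 1 : ℕ) : ℤ) by push_cast; ring]
          exact stirlingFirst_zero_of_deg _ _ (by omega)
        simp [hF, this]
    rw [h1, h2]
  rw [hsum]
  set S : ℚ := ∑ l ∈ Finset.range (j + 1), F l with hS
  set d : ℚ := ((n - k - 1 + j).choose j : ℚ) with hd
  have hrhs : ∑ l ∈ Finset.range (j + 1),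
        ((k - 1).factorial : ℚ) / (j.factorial : ℚ) * d *
          (stirlingFirst (j + 1) ((l : ℤ) + 1) : ℚ) *
          (stirlingFirst (n - k + 1) ((m : ℤ) - (l : ℤ) + 1) : ℚ)
      = ((k - 1).factorial : ℚ) / (j.factorial : ℚ) * d * S := by
    rw [hS, Finset.mul_sum]
    apply Finset.sum_congr rfl
    intro l _
    simp only [hF]
    ring
  rw [hrhs]
  -- scalar identity
  have hfac : ((n - 1).choose (k - 1) : ℚ) * ((k - 1).factorial : ℚ) * ((n - k).factorial : ℚ)
      = ((n - 1).factorial : ℚ) := by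
    have h := Nat.choose_mul_factorial_mul_factorial (show k - 1 ≤ n - 1 by omega)
    rw [show n - 1 - (k - 1) = n - k by omega] at h
    exact_mod_cast congrArg (Nat.cast : ℕ → ℚ) h
  have hj0 : (j.factorial : ℚ) ≠ 0 := Nat.cast_ne_zero.mpr (Nat.factorial_ne_zero j)
  have hnk0 : ((n - k).factorial : ℚ) ≠ 0 := Nat.cast_ne_zero.mpr (Nat.factorial_ne_zero _)
  have hn1 : ((n - 1).factorial : ℚ) ≠ 0 := Nat.cast_ne_zero.mpr (Nat.factorial_ne_zero _)
  have hch : (((n - 1).choose (k - 1) : ℚ)) ≠ 0 :=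
    Nat.cast_ne_zero.mpr (Nat.choose_pos (show k - 1 ≤ n - 1 by omega)).ne'
  field_simp
  linear_combination (-(S * d)) * hfac
end
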